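/- arXiv:2304.10046 — 11 statements merged into one kernel-verified Lean document; each statement's English description precedes it below -/
import Mathlib

section
/- For every integer d ≥ 1 and every even integer q ≥ 2, the variational problem of minimizing B_{d,q}(G)^{2(d+2)} · V_{d,1}(G)^{2q} over all differentiable G : [0,∞) → ℝ that satisfy the q-th order radial moment condition and have V_{d,1}(G) < ∞ has no solution: the objective value is strictly positive at every such feasible G, and yet for every ε > 0 there exists a feasible G whose objective value is less than ε (so the infimum of the objective over the feasible set equals 0 and is not attained). -/
open MeasureTheory Set Filter Topology

/-- Radial moment `B_{d,i}(G) = ∫₀^∞ x^{d−1+i} G(x) dx`. -/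
noncomputable def Bmom (d i : ℕ) (G : ℝ → ℝ) : ℝ :=
  ∫ x in Ioi (0 : ℝ), x ^ (d - 1 + i) * G x

/-- `V_{d,1}(G) = ∫₀^∞ x^{d−1} (G′(x))² dx`. -/
noncomputable def V1 (d : ℕ) (G : ℝ → ℝ) : ℝ :=
  ∫ x in Ioi (0 : ℝ), x ^ (d - 1) * (deriv G x) ^ 2

/-- `b_d = 2 π^{d/2} / Γ(d/2)`. -/
noncomputable def bconst (d : ℕ) : ℝ :=
  2 * Real.pi ^ ((d : ℝ) / 2) / Real.Gamma ((d : ℝ) / 2)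

/-- The `q`-th order radial moment condition, with all integrals converging absolutely:
`B_{d,0}(G) = 1/b_d`, `B_{d,i}(G) = 0` for even `2 ≤ i ≤ q−2`, and `B_{d,q}(G) ≠ 0`. -/
def MomentCond (d q : ℕ) (G : ℝ → ℝ) : Prop :=
  (∀ i, Even i → i ≤ q → IntegrableOn (fun x => x ^ (d - 1 + i) * G x) (Ioi 0)) ∧
  Bmom d 0 G = (bconst d)⁻¹ ∧
  (∀ i, Even i → 2 ≤ i → i ≤ q - 2 → Bmom d i G = 0) ∧
  Bmom d q G ≠ 0

/-- `g` changes its sign (exactly) `k` times on `[0,∞)`: there are points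
`0 = x₀ < x₁ < ⋯ < x_{k+1} = ∞` such that on each `[x_{j−1}, x_j]` the function has a
constant weak sign `s_j ∈ {±1}`, is not identically zero there, and consecutive signs
alternate. -/
def ChangesSign (g : ℝ → ℝ) (k : ℕ) : Prop :=
  ∃ (t : Fin (k + 2) → EReal) (s : Fin (k + 1) → ℝ),
    StrictMono t ∧ t 0 = 0 ∧ t (Fin.last (k + 1)) = ⊤ ∧
    (∀ j, s j = 1 ∨ s j = -1) ∧
    (∀ j : Fin k, s j.succ = - s j.castSucc) ∧
    ∀ j : Fin (k + 1),
      (∀ x : ℝ, t j.castSucc ≤ (x : EReal) → (x : EReal) ≤ t j.succ → 0 ≤ s j * g x) ∧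
      (∃ x : ℝ, t j.castSucc ≤ (x : EReal) ∧ (x : EReal) ≤ t j.succ ∧ 0 < s j * g x)

/-- Coefficients of the optimal kernel `G^B_{d,q}`. -/
noncomputable def cB (d q i : ℕ) : ℝ :=
  (-1 : ℝ) ^ (i / 2) * Real.Gamma (((d : ℝ) + q + 4) / 2) * Real.Gamma (((d : ℝ) + q + i) / 2) /
    (Real.pi ^ ((d : ℝ) / 2) * Real.Gamma ((q : ℝ) / 2) * Real.Gamma ((2 + (i : ℝ)) / 2) *
      Real.Gamma (((d : ℝ) + 2 + i) / 2) * Real.Gamma (((q : ℝ) + 4 - i) / 2))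

/-- The optimal radial kernel `G^B_{d,q}(x) = (∑_{i ∈ {0,2,…,q+2}} c_{d,q,i} x^i)·𝟙[x ≤ 1]`. -/
noncomputable def GB (d q : ℕ) : ℝ → ℝ := fun x =>
  if x ≤ 1 then ∑ i ∈ Finset.range (q / 2 + 2), cB d q (2 * i) * x ^ (2 * i) else 0

/-!
If `V_{d,1}(G) = 0`, then `G' = 0` a.e. on `(0,∞)`, so the differentiable `G` is constant
there, and integrability of `x^{d-1+q} G` forces the constant, hence `B_{d,q}(G)`, to vanish.

For the infimum, the Gram matrix `(∫₀^∞ x^{d-1+2i+2j} e^{-x²} dx)_{i,j ≤ q/2}` of the even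
monomials is positive definite, hence invertible. So there are even polynomials `p`, `r` such
that the moments `B_{d,0}, B_{d,2}, …, B_{d,q}` of `p e^{-x²}` are `(1/b_d, 0, …, 0)` and those
of `r e^{-x²}` are `(0, …, 0, 1)`. Then `G_δ = (p + δ r) e^{-x²}` is feasible with
`B_{d,q}(G_δ) = δ`, while `V_{d,1}(G_δ)` stays bounded as `δ → 0`.
-/

open Polynomial
open scoped Matrix

noncomputable section

def polyGaussian : ℝ[X] →ₗ[ℝ] ℝ → ℝ where
  toFun p x := p.eval x * Real.exp (-x ^ 2)
  map_add' p r := by ext x; simp [add_mul]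
  map_smul' c p := by ext x; simp [mul_assoc]

lemma polyGaussian_apply (p : ℝ[X]) (x : ℝ) :
    polyGaussian p x = p.eval x * Real.exp (-x ^ 2) := rfl

lemma hasDerivAt_polyGaussian (p : ℝ[X]) (x : ℝ) :
    HasDerivAt (polyGaussian p) (polyGaussian (derivative p - 2 * X * p) x) x := by
  refine ((p.hasDerivAt x).mul (hasDerivAt_pow 2 x).neg.exp).congr_deriv ?_
  simp only [polyGaussian_apply, eval_sub, eval_mul, eval_X, eval_ofNat, Pi.neg_apply]
  ring

lemma deriv_polyGaussian (p : ℝ[X]) :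
    deriv (polyGaussian p) = polyGaussian (derivative p - 2 * X * p) :=
  funext fun x => (hasDerivAt_polyGaussian p x).deriv

lemma differentiable_polyGaussian (p : ℝ[X]) : Differentiable ℝ (polyGaussian p) :=
  fun x => (hasDerivAt_polyGaussian p x).differentiableAt

lemma integrableOn_eval_mul_exp_neg_mul_sq (p : ℝ[X]) {b : ℝ} (hb : 0 < b) :
    IntegrableOn (fun x => p.eval x * Real.exp (-b * x ^ 2)) (Ioi 0) := by
  induction p using Polynomial.induction_on' with
  | add p r hp hr =>
    exact (hp.add hr).congr_fun (fun x _ => by simp [add_mul]) measurableSet_Ioi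
  | monomial n a =>
    have hn : (-1 : ℝ) < n := by linarith [n.cast_nonneg (α := ℝ)]
    refine IntegrableOn.congr_fun ((integrableOn_rpow_mul_exp_neg_mul_sq hb hn).const_mul a)
      (fun x _ => ?_) measurableSet_Ioi
    simp [Real.rpow_natCast, mul_assoc]

lemma integrableOn_pow_mul_polyGaussian (n : ℕ) (p : ℝ[X]) :
    IntegrableOn (fun x => x ^ n * polyGaussian p x) (Ioi 0) := by
  refine (integrableOn_eval_mul_exp_neg_mul_sq (X ^ n * p) one_pos).congr_fun
    (fun x _ => ?_) measurableSet_Ioi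
  simp only [polyGaussian_apply, eval_mul, eval_pow, eval_X, neg_mul, one_mul]
  ring

lemma integrableOn_pow_mul_polyGaussian_sq (n : ℕ) (p : ℝ[X]) :
    IntegrableOn (fun x => x ^ n * polyGaussian p x ^ 2) (Ioi 0) := by
  refine (integrableOn_eval_mul_exp_neg_mul_sq (X ^ n * p ^ 2) two_pos).congr_fun
    (fun x _ => ?_) measurableSet_Ioi
  rw [polyGaussian_apply, mul_pow, ← Real.exp_nat_mul]
  simp only [eval_mul, eval_pow, eval_X]
  push_cast
  ring_nf

def evenPoly (N : ℕ) : (Fin N → ℝ) →ₗ[ℝ] ℝ[X] :=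
  ∑ i : Fin N, (monomial (2 * (i : ℕ))).comp (LinearMap.proj i)

lemma evenPoly_apply {N : ℕ} (c : Fin N → ℝ) :
    evenPoly N c = ∑ i : Fin N, monomial (2 * (i : ℕ)) (c i) := by
  simp [evenPoly]

lemma eval_evenPoly {N : ℕ} (c : Fin N → ℝ) (x : ℝ) :
    (evenPoly N c).eval x = ∑ i, c i * x ^ (2 * (i : ℕ)) := by
  simp [evenPoly_apply, eval_finsetSum]

lemma coeff_evenPoly {N : ℕ} (c : Fin N → ℝ) (i : Fin N) :
    (evenPoly N c).coeff (2 * (i : ℕ)) = c i := by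
  simp [evenPoly_apply, finsetSum_coeff, coeff_monomial, Fin.val_inj]

lemma evenPoly_injective (N : ℕ) : Function.Injective (evenPoly N) := fun c c' h =>
  funext fun i => by simpa only [coeff_evenPoly] using congrArg (coeff · (2 * (i : ℕ))) h

def gaussGram (d N : ℕ) : Matrix (Fin N) (Fin N) ℝ :=
  Matrix.of fun j i =>
    ∫ x in Ioi (0 : ℝ), x ^ (d - 1 + 2 * (j : ℕ) + 2 * (i : ℕ)) * Real.exp (-x ^ 2)

lemma Bmom_polyGaussian_evenPoly (d : ℕ) {N : ℕ} (c : Fin N → ℝ) (j : Fin N) :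
    Bmom d (2 * j) (polyGaussian (evenPoly N c)) = (gaussGram d N *ᵥ c) j := by
  have hsum : (fun x => x ^ (d - 1 + 2 * (j : ℕ)) * polyGaussian (evenPoly N c) x) = fun x =>
      ∑ i : Fin N, x ^ (d - 1 + 2 * (j : ℕ) + 2 * (i : ℕ)) * Real.exp (-x ^ 2) * c i := by
    ext x
    simp only [polyGaussian_apply, eval_evenPoly, Finset.sum_mul, Finset.mul_sum, pow_add]
    exact Finset.sum_congr rfl fun i _ => by ring
  have hint (i : Fin N) :
      IntegrableOn (fun x => x ^ (d - 1 + 2 * (j : ℕ) + 2 * (i : ℕ)) * Real.exp (-x ^ 2))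
        (Ioi 0) := by
    simpa [polyGaussian_apply] using integrableOn_pow_mul_polyGaussian _ 1
  rw [Bmom, hsum, integral_finsetSum _ fun i _ => (hint i).mul_const _]
  simp only [integral_mul_const, Matrix.mulVec, dotProduct, gaussGram, Matrix.of_apply]

lemma dotProduct_gaussGram_mulVec (d : ℕ) {N : ℕ} (c : Fin N → ℝ) :
    c ⬝ᵥ (gaussGram d N *ᵥ c) =
      ∫ x in Ioi (0 : ℝ), x ^ (d - 1) * polyGaussian (evenPoly N c ^ 2) x := by
  have hsum : (fun x => x ^ (d - 1) * polyGaussian (evenPoly N c ^ 2) x) = fun x =>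
      ∑ j : Fin N, c j * (x ^ (d - 1 + 2 * (j : ℕ)) * polyGaussian (evenPoly N c) x) := by
    ext x
    simp only [polyGaussian_apply, eval_pow, pow_add, eval_evenPoly]
    rw [sq, Finset.sum_mul, Finset.sum_mul, Finset.mul_sum]
    exact Finset.sum_congr rfl fun j _ => by ring
  rw [hsum, integral_finsetSum _ fun j _ => (integrableOn_pow_mul_polyGaussian _ _).const_mul _]
  simp only [integral_const_mul, dotProduct]
  exact Finset.sum_congr rfl fun j _ => by rw [← Bmom_polyGaussian_evenPoly, Bmom]

lemma Polynomial.eq_zero_of_ae_eval_eq_zero {p : ℝ[X]} {s : Set ℝ} (hs : volume s ≠ 0)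
    (h : ∀ᵐ x ∂volume.restrict s, p.eval x = 0) : p = 0 := by
  by_contra hp
  have hroots : ∀ᵐ x, p.eval x ≠ 0 :=
    measure_eq_zero_iff_ae_notMem.1 ((finite_setOfPred_isRoot hp).measure_zero volume)
  have hfalse : ∀ᵐ x ∂volume.restrict s, False :=
    ((ae_restrict_of_ae hroots).and h).mono fun x hx => hx.1 hx.2
  exact hs (Measure.restrict_eq_zero.1 (ae_eq_bot.1 (eventually_false_iff_eq_bot.1 hfalse)))

lemma gaussGram_mulVec_injective (d N : ℕ) : Function.Injective (gaussGram d N).mulVec := by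
  refine (injective_iff_map_eq_zero (gaussGram d N).mulVecLin).2 fun c hc => ?_
  set P := evenPoly N c
  have hint := integrableOn_pow_mul_polyGaussian (d - 1) (P ^ 2)
  have hnonneg :
      0 ≤ᵐ[volume.restrict (Ioi 0)] fun x => x ^ (d - 1) * polyGaussian (P ^ 2) x := by
    filter_upwards [ae_restrict_mem measurableSet_Ioi] with x (hx : 0 < x)
    simp only [Pi.zero_apply, polyGaussian_apply, eval_pow]
    positivity
  have hzero : ∫ x in Ioi (0 : ℝ), x ^ (d - 1) * polyGaussian (P ^ 2) x = 0 := by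
    rw [← dotProduct_gaussGram_mulVec, ← Matrix.mulVecLin_apply, hc, dotProduct_zero]
  have hP : P = 0 := by
    refine Polynomial.eq_zero_of_ae_eval_eq_zero (s := Ioi 0) (by simp) ?_
    filter_upwards [(setIntegral_eq_zero_iff_of_nonneg_ae hnonneg hint).1 hzero,
      ae_restrict_mem measurableSet_Ioi] with x hx (hx0 : 0 < x)
    simpa [polyGaussian_apply, hx0.ne', Real.exp_ne_zero] using hx
  exact evenPoly_injective N (hP.trans (map_zero _).symm)

lemma gaussGram_mulVec_surjective (d N : ℕ) : Function.Surjective (gaussGram d N).mulVec :=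
  Matrix.mulVec_surjective_iff_isUnit.2
    (Matrix.mulVec_injective_iff_isUnit.1 (gaussGram_mulVec_injective d N))

lemma V1_nonneg (d : ℕ) (G : ℝ → ℝ) : 0 ≤ V1 d G :=
  setIntegral_nonneg measurableSet_Ioi fun x (hx : 0 < x) => by positivity

lemma V1_add_smul_le (d : ℕ) {G H : ℝ → ℝ} (hG : Differentiable ℝ G) (hH : Differentiable ℝ H)
    (hG' : IntegrableOn (fun x => x ^ (d - 1) * deriv G x ^ 2) (Ioi 0))
    (hH' : IntegrableOn (fun x => x ^ (d - 1) * deriv H x ^ 2) (Ioi 0)) (δ : ℝ) :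
    V1 d (G + δ • H) ≤ 2 * V1 d G + 2 * δ ^ 2 * V1 d H := by
  have hderiv (x : ℝ) : deriv (G + δ • H) x = deriv G x + δ * deriv H x :=
    ((hG x).hasDerivAt.add ((hH x).hasDerivAt.const_smul δ)).deriv
  calc V1 d (G + δ • H)
      ≤ ∫ x in Ioi 0,
          2 * (x ^ (d - 1) * deriv G x ^ 2) + 2 * δ ^ 2 * (x ^ (d - 1) * deriv H x ^ 2) := by
        refine integral_mono_of_nonneg ?_ ((hG'.const_mul 2).add (hH'.const_mul _)) ?_
        · filter_upwards [ae_restrict_mem measurableSet_Ioi] with x (hx : 0 < x)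
          positivity
        · filter_upwards [ae_restrict_mem measurableSet_Ioi] with x (hx : 0 < x)
          rw [hderiv]
          nlinarith [mul_nonneg (pow_pos hx (d - 1)).le (sq_nonneg (deriv G x - δ * deriv H x))]
    _ = 2 * V1 d G + 2 * δ ^ 2 * V1 d H := by
        rw [integral_add (hG'.const_mul 2) (hH'.const_mul _), integral_const_mul,
          integral_const_mul, V1, V1]

lemma eq_of_deriv_ae_eq_zero {G : ℝ → ℝ} {a b : ℝ} (hab : a ≤ b)
    (hG : ∀ x ∈ Icc a b, DifferentiableAt ℝ G x) (h : deriv G =ᵐ[volume.restrict (Ioc a b)] 0) :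
    G b = G a := by
  have hint : IntervalIntegrable (deriv G) volume a b :=
    (intervalIntegrable_iff_integrableOn_Ioc_of_le hab).2 ((integrable_zero _ _ _).congr h.symm)
  have hftc := intervalIntegral.integral_eq_sub_of_hasDerivAt
    (fun x hx => (hG x (uIcc_of_le hab ▸ hx)).hasDerivAt) hint
  rw [intervalIntegral.integral_of_le hab, integral_eq_zero_of_ae h] at hftc
  linarith

lemma eq_zero_of_integrableOn_pow_mul_const {n : ℕ} {c : ℝ}
    (h : IntegrableOn (fun x : ℝ => x ^ n * c) (Ioi 0)) : c = 0 := by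
  have hc : IntegrableOn (fun _ : ℝ => c) (Ioi 1) := by
    refine Integrable.mono (h.mono_set (Ioi_subset_Ioi zero_le_one)) aestronglyMeasurable_const ?_
    filter_upwards [ae_restrict_mem measurableSet_Ioi] with x (hx : 1 < x)
    rw [norm_mul, norm_pow, Real.norm_of_nonneg (zero_le_one.trans hx.le)]
    exact le_mul_of_one_le_left (norm_nonneg _) (one_le_pow₀ hx.le)
  simpa using hc

lemma V1_pos {d i : ℕ} {G : ℝ → ℝ} (hG : ∀ x ∈ Ioi (0 : ℝ), DifferentiableAt ℝ G x)
    (hint : IntegrableOn (fun x => x ^ (d - 1 + i) * G x) (Ioi 0)) (hB : Bmom d i G ≠ 0)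
    (hV : IntegrableOn (fun x => x ^ (d - 1) * deriv G x ^ 2) (Ioi 0)) : 0 < V1 d G := by
  refine (V1_nonneg d G).lt_of_ne' fun hV0 => hB ?_
  have hderiv : deriv G =ᵐ[volume.restrict (Ioi 0)] 0 := by
    have hnonneg : 0 ≤ᵐ[volume.restrict (Ioi 0)] fun x => x ^ (d - 1) * deriv G x ^ 2 := by
      filter_upwards [ae_restrict_mem measurableSet_Ioi] with x (hx : 0 < x)
      positivity
    filter_upwards [(setIntegral_eq_zero_iff_of_nonneg_ae hnonneg hV).1 hV0,
      ae_restrict_mem measurableSet_Ioi] with x hx (hx0 : 0 < x)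
    simpa [hx0.ne'] using hx
  have hconst (x : ℝ) (hx : 0 < x) : G x = G 1 := by
    have hdiff {a b : ℝ} (ha : 0 < a) (hab : a ≤ b) : G b = G a :=
      eq_of_deriv_ae_eq_zero hab (fun y hy => hG y (ha.trans_le hy.1))
        (ae_restrict_of_ae_restrict_of_subset (Ioc_subset_Ioi_self.trans (Ioi_subset_Ioi ha.le))
          hderiv)
    rcases le_total x 1 with hx1 | hx1
    · exact (hdiff hx hx1).symm
    · exact hdiff one_pos hx1
  have hG1 : G 1 = 0 := eq_zero_of_integrableOn_pow_mul_const (n := d - 1 + i)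
    (hint.congr_fun (fun x hx => by simp only [hconst x hx]) measurableSet_Ioi)
  exact setIntegral_eq_zero_of_forall_eq_zero fun x hx => by rw [hconst x hx, hG1, mul_zero]

def IsFeasible (d q : ℕ) (G : ℝ → ℝ) : Prop :=
  (∀ x ∈ Ici (0 : ℝ), DifferentiableAt ℝ G x) ∧ MomentCond d q G ∧
    IntegrableOn (fun x => x ^ (d - 1) * (deriv G x) ^ 2) (Ioi 0)

lemma momentCond_of_Bmom_eq {d m : ℕ} (hm : 1 ≤ m) {G : ℝ → ℝ} {δ : ℝ} (hδ : δ ≠ 0)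
    (hint : ∀ i, IntegrableOn (fun x => x ^ (d - 1 + i) * G x) (Ioi 0))
    (hB : ∀ j : Fin (m + 1),
      Bmom d (2 * j) G =
        (Pi.single 0 (bconst d)⁻¹ + Pi.single (Fin.last m) δ : Fin (m + 1) → ℝ) j) :
    MomentCond d (2 * m) G := by
  have hlast : Fin.last m ≠ 0 := Fin.ext_iff.not.2 (by simp; omega)
  refine ⟨fun i _ _ => hint i, by simpa [hlast.symm] using hB 0, ?_,
    fun h => hδ (by simpa [hlast, h, eq_comm] using hB (Fin.last m))⟩
  rintro i ⟨k, rfl⟩ hk hkm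
  have hk0 : (⟨k, by omega⟩ : Fin (m + 1)) ≠ 0 := Fin.ext_iff.not.2 (by simp; omega)
  have hkl : (⟨k, by omega⟩ : Fin (m + 1)) ≠ Fin.last m := Fin.ext_iff.not.2 (by simp; omega)
  simpa [← two_mul, hk0, hkl] using hB ⟨k, by omega⟩

lemma exists_isFeasible_Bmom_eq_V1_le (d : ℕ) {q : ℕ} (hq : 2 ≤ q) (hqe : Even q) :
    ∃ K, ∀ δ, 0 < δ → δ ≤ 1 → ∃ G, IsFeasible d q G ∧ Bmom d q G = δ ∧ V1 d G ≤ K := by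
  obtain ⟨m, rfl⟩ := hqe.two_dvd
  have hlast : Fin.last m ≠ 0 := Fin.ext_iff.not.2 (by simp; omega)
  obtain ⟨a, ha⟩ := gaussGram_mulVec_surjective d (m + 1) (Pi.single 0 (bconst d)⁻¹)
  obtain ⟨r, hr⟩ := gaussGram_mulVec_surjective d (m + 1) (Pi.single (Fin.last m) 1)
  have hV (p : ℝ[X]) :
      IntegrableOn (fun x => x ^ (d - 1) * deriv (polyGaussian p) x ^ 2) (Ioi 0) := by
    rw [deriv_polyGaussian]
    exact integrableOn_pow_mul_polyGaussian_sq _ _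
  set Ga := polyGaussian (evenPoly (m + 1) a)
  set Gr := polyGaussian (evenPoly (m + 1) r)
  refine ⟨2 * V1 d Ga + 2 * V1 d Gr, fun δ hδ hδ1 => ?_⟩
  have hB (j : Fin (m + 1)) : Bmom d (2 * j) (polyGaussian (evenPoly (m + 1) (a + δ • r))) =
      (Pi.single 0 (bconst d)⁻¹ + Pi.single (Fin.last m) δ : Fin (m + 1) → ℝ) j := by
    rw [Bmom_polyGaussian_evenPoly, Matrix.mulVec_add, Matrix.mulVec_smul, ha, hr]
    simp [Pi.single_apply]
  refine ⟨_, ⟨fun x _ => differentiable_polyGaussian _ x,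
    momentCond_of_Bmom_eq (by omega) hδ.ne' (fun i => integrableOn_pow_mul_polyGaussian _ _) hB,
    hV _⟩, by simpa [hlast] using hB (Fin.last m), ?_⟩
  rw [map_add, map_smul, map_add, map_smul]
  calc V1 d (Ga + δ • Gr) ≤ 2 * V1 d Ga + 2 * δ ^ 2 * V1 d Gr :=
        V1_add_smul_le d (differentiable_polyGaussian _) (differentiable_polyGaussian _)
          (hV _) (hV _) δ
    _ ≤ 2 * V1 d Ga + 2 * V1 d Gr := by
        nlinarith [mul_le_mul_of_nonneg_right (pow_le_one₀ hδ.le hδ1 : δ ^ 2 ≤ 1) (V1_nonneg d Gr)]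

end

theorem type1_problem_no_solution_general (d q : ℕ) (hq : 2 ≤ q) (hqe : Even q) :
    (∀ G : ℝ → ℝ, (∀ x ∈ Ici (0 : ℝ), DifferentiableAt ℝ G x) → MomentCond d q G →
      IntegrableOn (fun x => x ^ (d - 1) * (deriv G x) ^ 2) (Ioi 0) →
      0 < Bmom d q G ^ (2 * (d + 2)) * V1 d G ^ (2 * q)) ∧
    (∀ ε : ℝ, 0 < ε →
      ∃ G : ℝ → ℝ, (∀ x ∈ Ici (0 : ℝ), DifferentiableAt ℝ G x) ∧ MomentCond d q G ∧
        IntegrableOn (fun x => x ^ (d - 1) * (deriv G x) ^ 2) (Ioi 0) ∧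
        Bmom d q G ^ (2 * (d + 2)) * V1 d G ^ (2 * q) < ε) := by
  refine ⟨fun G hdiff hmom hV => ?_, fun ε hε => ?_⟩
  · have hV1 := V1_pos (fun x hx => hdiff x (Ioi_subset_Ici_self hx)) (hmom.1 q hqe le_rfl)
      hmom.2.2.2 hV
    exact mul_pos ((even_two_mul _).pow_pos hmom.2.2.2) (pow_pos hV1 _)
  · obtain ⟨K, hK⟩ := exists_isFeasible_Bmom_eq_V1_le d hq hqe
    have hlim : Tendsto (fun δ : ℝ => δ ^ (2 * (d + 2)) * K ^ (2 * q)) (𝓝 0) (𝓝 0) := by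
      have hcont : Continuous fun δ : ℝ => δ ^ (2 * (d + 2)) * K ^ (2 * q) := by fun_prop
      simpa using hcont.tendsto 0
    have hsmall :
        ∀ᶠ δ in 𝓝[>] (0 : ℝ), (δ ^ (2 * (d + 2)) * K ^ (2 * q) < ε ∧ δ ≤ 1) ∧ 0 < δ :=
      (((hlim.eventually (gt_mem_nhds hε)).and (eventually_le_nhds one_pos)).filter_mono
        nhdsWithin_le_nhds).and self_mem_nhdsWithin
    obtain ⟨δ, ⟨hδε, hδ1⟩, hδ⟩ := hsmall.exists
    obtain ⟨G, ⟨hdiff, hmom, hV⟩, hB, hVK⟩ := hK δ hδ hδ1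
    refine ⟨G, hdiff, hmom, hV, lt_of_le_of_lt ?_ hδε⟩
    rw [hB]
    exact mul_le_mul_of_nonneg_left (pow_le_pow_left₀ (V1_nonneg d G) hVK _) (by positivity)

/-- The type-1 variational problem has no solution: among differentiable `G` on `[0,∞)`
satisfying the `q`-th order radial moment condition with `V_{d,1}(G) < ∞`, the objective
`B_{d,q}(G)^{2(d+2)}·V_{d,1}(G)^{2q}` is strictly positive everywhere on the feasible set,
yet its infimum over the feasible set is `0` (it gets below any `ε > 0`), so it is not
attained. -/
theorem type1_problem_no_solution (d q : ℕ) (hd : 1 ≤ d) (hq : 2 ≤ q) (hqe : Even q) :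
    (∀ G : ℝ → ℝ, (∀ x ∈ Ici (0 : ℝ), DifferentiableAt ℝ G x) → MomentCond d q G →
      IntegrableOn (fun x => x ^ (d - 1) * (deriv G x) ^ 2) (Ioi 0) →
      0 < Bmom d q G ^ (2 * (d + 2)) * V1 d G ^ (2 * q)) ∧
    (∀ ε : ℝ, 0 < ε →
      ∃ G : ℝ → ℝ, (∀ x ∈ Ici (0 : ℝ), DifferentiableAt ℝ G x) ∧ MomentCond d q G ∧
        IntegrableOn (fun x => x ^ (d - 1) * (deriv G x) ^ 2) (Ioi 0) ∧
        Bmom d q G ^ (2 * (d + 2)) * V1 d G ^ (2 * q) < ε) :=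
  type1_problem_no_solution_general d q hq hqe
end

section
/- Let q ≥ 2 be an even integer and d ≥ q+1. Let a₁, …, a_{q+1} ∈ ℝ^d be linearly independent vectors and let p : ℝ^d → ℝ be the polynomial p(u) = ∏_{i=1}^{q+1} (a_iᵀu). Then there exists a symmetric positive definite d×d real matrix Q such that ∇(∇ᵀQ∇)^{q/2} p vanishes identically on ℝ^d. -/
open scoped RealInnerProductSpace Matrix

/-- Partial derivative in coordinate `j` of a function on `ℝ^d`. -/
noncomputable def pd {d : ℕ} (j : Fin d) (f : EuclideanSpace ℝ (Fin d) → ℝ) :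
    EuclideanSpace ℝ (Fin d) → ℝ :=
  fun x => fderiv ℝ f x (EuclideanSpace.single j 1)

/-- The differential operator `∇ᵀQ∇ = ∑ i j, Q i j ∂_i ∂_j`. -/
noncomputable def LQ {d : ℕ} (Q : Matrix (Fin d) (Fin d) ℝ)
    (f : EuclideanSpace ℝ (Fin d) → ℝ) : EuclideanSpace ℝ (Fin d) → ℝ :=
  fun x => ∑ i, ∑ j, Q i j * pd i (pd j f) x

/-! Choose `Q = Gᵀ G`, where `G` sends a basis extending `a₁, …, a_{q+1}` to the standard
basis, so that the `aᵢ` are pairwise `Q`-orthogonal. By the product rule,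
`∇ᵀQ∇ ∏ₘ ⟪aₘ, u⟫ = ∑_{k ≠ l} (aₗᵀ Q aₖ) ∏_{m ≠ k, l} ⟪aₘ, u⟫`, so a single application of the
operator already annihilates the product, and `q / 2 ≥ 1`. -/

open Finset Matrix

theorem Module.Basis.sumExtend_apply_inl {K V ι : Type*} [DivisionRing K] [AddCommGroup V]
    [Module K V] {v : ι → V} (hv : LinearIndependent K v) (i : ι) :
    Module.Basis.sumExtend hv (Sum.inl i) = v i := by
  simp only [Module.Basis.sumExtend, Module.Basis.reindex_apply, Module.Basis.coe_extend]
  rfl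

theorem Matrix.exists_posDef_pairwise_dotProduct_mulVec_eq_zero {ι n : Type*} [Fintype n]
    [DecidableEq n] {v : ι → n → ℝ} (hv : LinearIndependent ℝ v) :
    ∃ Q : Matrix n n ℝ, Q.PosDef ∧ Pairwise fun k l => v k ⬝ᵥ Q *ᵥ v l = 0 := by
  classical
  let b := Module.Basis.sumExtend hv
  have := Module.Finite.finite_basis b
  have := Fintype.ofFinite (ι ⊕ Module.Basis.sumExtendIndex hv)
  let G := LinearMap.toMatrix' b.equivFun.toLinearMap
  have hG : ∀ x, G *ᵥ x = b.equivFun x := LinearMap.toMatrix'_mulVec _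
  have hGv : ∀ k, G *ᵥ v k = Pi.single (Sum.inl k) 1 := fun k => by
    rw [hG, ← LinearEquiv.eq_symm_apply, Basis.equivFun_symm_single]
    exact (Module.Basis.sumExtend_apply_inl hv k).symm
  refine ⟨Gᵀ * G, ?_, fun k l hkl => ?_⟩
  · rw [← conjTranspose_eq_transpose_of_trivial]
    exact PosDef.conjTranspose_mul_self G fun x y h => b.equivFun.injective (by rwa [hG, hG] at h)
  · dsimp only
    rw [← mulVec_mulVec, dotProduct_mulVec, vecMul_transpose, hGv, hGv]
    simp [hkl]

section
variable {d : ℕ} {ι : Type*}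

theorem pd_zero (j : Fin d) : pd j (0 : EuclideanSpace ℝ (Fin d) → ℝ) = 0 := by
  funext x
  simp [pd]

theorem LQ_zero (Q : Matrix (Fin d) (Fin d) ℝ) : LQ Q 0 = 0 := by
  funext x
  simp [LQ, pd_zero]

theorem pd_sum_const_mul {f : ι → EuclideanSpace ℝ (Fin d) → ℝ} (s : Finset ι) (r : ι → ℝ)
    (hf : ∀ k ∈ s, Differentiable ℝ (f k)) (j : Fin d) :
    pd j (fun x => ∑ k ∈ s, r k * f k x) = fun x => ∑ k ∈ s, r k * pd j (f k) x := by
  funext x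
  rw [pd, fderiv_fun_sum fun k hk => ((hf k hk).const_mul (r k)).differentiableAt,
    _root_.sum_apply]
  refine sum_congr rfl fun k hk => ?_
  rw [fderiv_const_mul (hf k hk x) (r k)]
  rfl

variable [DecidableEq ι]

theorem hasFDerivAt_prod_inner (c : ι → EuclideanSpace ℝ (Fin d)) (s : Finset ι)
    (x : EuclideanSpace ℝ (Fin d)) :
    HasFDerivAt (fun v => ∏ m ∈ s, ⟪c m, v⟫)
      (∑ k ∈ s, (∏ m ∈ s.erase k, ⟪c m, x⟫) • innerSL ℝ (c k)) x :=
  HasFDerivAt.finsetProd fun k _ => (innerSL ℝ (c k)).hasFDerivAt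

theorem pd_prod_inner (c : ι → EuclideanSpace ℝ (Fin d)) (s : Finset ι) (j : Fin d) :
    pd j (fun v => ∏ m ∈ s, ⟪c m, v⟫) = fun x => ∑ k ∈ s, c k j * ∏ m ∈ s.erase k, ⟪c m, x⟫ := by
  funext x
  rw [pd, (hasFDerivAt_prod_inner c s x).fderiv]
  simp [EuclideanSpace.inner_single_right, mul_comm]

theorem pd_pd_prod_inner (c : ι → EuclideanSpace ℝ (Fin d)) (s : Finset ι) (i j : Fin d) :
    pd i (pd j fun v => ∏ m ∈ s, ⟪c m, v⟫) = fun x =>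
      ∑ k ∈ s, ∑ l ∈ s.erase k, c k j * c l i * ∏ m ∈ (s.erase k).erase l, ⟪c m, x⟫ := by
  rw [pd_prod_inner, pd_sum_const_mul _ _ fun k _ x =>
    (hasFDerivAt_prod_inner c _ x).differentiableAt]
  simp only [pd_prod_inner, mul_sum, mul_assoc]

theorem LQ_prod_inner (Q : Matrix (Fin d) (Fin d) ℝ) (c : ι → EuclideanSpace ℝ (Fin d))
    (s : Finset ι) :
    LQ Q (fun v => ∏ m ∈ s, ⟪c m, v⟫) = fun x =>
      ∑ k ∈ s, ∑ l ∈ s.erase k, ((c l).ofLp ⬝ᵥ Q *ᵥ (c k).ofLp) *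
        ∏ m ∈ (s.erase k).erase l, ⟪c m, x⟫ := by
  funext x
  simp only [LQ, pd_pd_prod_inner, dotProduct, Matrix.mulVec, mul_sum, sum_mul]
  simp only [sum_comm (s := (univ : Finset (Fin d))) (α := ι)]
  exact sum_congr rfl fun k _ => sum_congr rfl fun l _ =>
    sum_congr rfl fun a _ => sum_congr rfl fun b _ => by ring

theorem LQ_prod_inner_eq_zero (Q : Matrix (Fin d) (Fin d) ℝ) (c : ι → EuclideanSpace ℝ (Fin d))
    (s : Finset ι) (hc : Pairwise fun k l => (c k).ofLp ⬝ᵥ Q *ᵥ (c l).ofLp = 0) :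
    LQ Q (fun v => ∏ m ∈ s, ⟪c m, v⟫) = 0 := by
  rw [LQ_prod_inner]
  funext x
  exact sum_eq_zero fun k _ => sum_eq_zero fun l hl => by
    rw [hc (ne_of_mem_erase hl), zero_mul]

end

theorem exists_posDef_gradient_iterate_prod_linear_eq_zero_general (d q : ℕ) (hq : 2 ≤ q)
    (a : Fin (q + 1) → EuclideanSpace ℝ (Fin d)) (ha : LinearIndependent ℝ a) :
    ∃ Q : Matrix (Fin d) (Fin d) ℝ, Q.PosDef ∧
      ∀ u, gradient ((LQ Q)^[q / 2] fun v => ∏ i, ⟪a i, v⟫) u = 0 := by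
  obtain ⟨Q, hQ, horth⟩ := exists_posDef_pairwise_dotProduct_mulVec_eq_zero
    (ha.map' (WithLp.linearEquiv 2 ℝ (Fin d → ℝ)).toLinearMap (LinearEquiv.ker _))
  refine ⟨Q, hQ, fun u => ?_⟩
  obtain ⟨m, hm⟩ : ∃ m, q / 2 = m + 1 := ⟨q / 2 - 1, by omega⟩
  rw [hm, Function.iterate_succ_apply, LQ_prod_inner_eq_zero Q a univ horth,
    Function.iterate_fixed (LQ_zero Q)]
  exact gradient_const u 0

/-- If `a₁, …, a_{q+1}` are linearly independent vectors in `ℝ^d` with `d ≥ q+1`, then there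
is a symmetric positive definite matrix `Q` such that `∇(∇ᵀQ∇)^{q/2} ∏ᵢ (aᵢᵀu)` vanishes
identically. -/
theorem exists_posDef_gradient_iterate_prod_linear_eq_zero (d q : ℕ) (hq : 2 ≤ q)
    (hqe : Even q) (hd : q + 1 ≤ d)
    (a : Fin (q + 1) → EuclideanSpace ℝ (Fin d)) (ha : LinearIndependent ℝ a) :
    ∃ Q : Matrix (Fin d) (Fin d) ℝ, Q.PosDef ∧
      ∀ u, gradient ((LQ Q)^[q / 2] fun v => ∏ i, ⟪a i, v⟫) u = 0 :=
  exists_posDef_gradient_iterate_prod_linear_eq_zero_general d q hq a ha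
end

section
/- Let q ≥ 2 be an even integer and d ≥ q. Let a₁, …, a_{q+1} ∈ ℝ^d be vectors that span a q-dimensional subspace of ℝ^d, and suppose there exist real numbers s₁, …, s_{q+1}, all nonzero, with Σ_{i=1}^{q+1} s_i a_i = 0. Let p : ℝ^d → ℝ be the polynomial p(u) = ∏_{i=1}^{q+1} (a_iᵀu). Then there exists a symmetric positive definite d×d real matrix Q such that ∇(∇ᵀQ∇)^{q/2} p vanishes identically on ℝ^d. -/
open scoped RealInnerProductSpace Matrix

/-!
Put `bₖ = sₖ aₖ`, so that `∑ bₖ = 0`. Since `span a` has dimension `q`, this is the only linear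
relation among the `aₖ`; hence `aₖ ↦ sₖ⁻¹ (eₖ - 𝟙/(q+1))` extends to an injective linear map on
`span a`, and pulling back the inner product (extended by the standard one on `(span a)ᗮ`) gives a
positive definite `Q` with `aₖᵀ Q aₗ = -1/((q+1) sₖ sₗ)` for `k ≠ l`: the `bₖ` become the vertices
of a regular simplex centred at `0`.

On polynomials `∑_T c_T ∏_{i ∈ T} ⟪aᵢ, u⟫`, the operator `∇ᵀQ∇` removes two factors `k ≠ l` with
weight `aₗᵀ Q aₖ`. For this `Q`, the coefficients `c_T = ∏_{j ∉ T} sⱼ⁻¹` on the sets with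
`|T| = r + 2` are therefore sent to a multiple of the same coefficients on the sets with `|T| = r`.
Starting from `T = univ` (the product itself), after `q/2` steps only `|T| = 1` is left, and that
polynomial is a multiple of `∑ₖ sₖ ⟪aₖ, u⟫ = 0`.
-/

theorem Finset.sum_sum_mem_eq_sum_sum_compl_insert {ι M : Type*} [Fintype ι] [DecidableEq ι]
    [AddCommMonoid M] (g : Finset ι → ι → M) :
    ∑ T, ∑ k ∈ T, g T k = ∑ U, ∑ k ∈ Uᶜ, g (insert k U) k := by
  calc ∑ T, ∑ k ∈ T, g T k = ∑ k, ∑ T with k ∈ T, g T k := Finset.sum_comm' (by simp)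
    _ = ∑ k, ∑ U with k ∉ U, g (insert k U) k :=
      Finset.sum_congr rfl fun k _ => Finset.sum_nbij' (·.erase k) (insert k)
        (by simp) (by simp) (by simp +contextual) (by simp +contextual)
        (by simp +contextual [Finset.insert_erase])
    _ = ∑ U, ∑ k ∈ Uᶜ, g (insert k U) k := (Finset.sum_comm' (by simp)).symm

theorem Finset.sum_sum_sum_sum_comm {α β γ δ M : Type*} [AddCommMonoid M] {s : Finset α}
    {t : Finset β} {u : Finset γ} {v : γ → Finset δ} (f : α → β → γ → δ → M) :
    ∑ a ∈ s, ∑ b ∈ t, ∑ c ∈ u, ∑ e ∈ v c, f a b c e =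
      ∑ c ∈ u, ∑ e ∈ v c, ∑ a ∈ s, ∑ b ∈ t, f a b c e :=
  calc _ = ∑ a ∈ s, ∑ c ∈ u, ∑ b ∈ t, ∑ e ∈ v c, f a b c e :=
        Finset.sum_congr rfl fun _ _ => Finset.sum_comm
    _ = ∑ c ∈ u, ∑ a ∈ s, ∑ e ∈ v c, ∑ b ∈ t, f a b c e :=
        Finset.sum_comm.trans <| Finset.sum_congr rfl fun _ _ =>
          Finset.sum_congr rfl fun _ _ => Finset.sum_comm
    _ = _ := Finset.sum_congr rfl fun _ _ => Finset.sum_comm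

section RangeEquiv

variable {R M E F : Type*} [Ring R] [AddCommGroup M] [AddCommGroup E] [AddCommGroup F]
  [Module R M] [Module R E] [Module R F]

noncomputable def LinearMap.rangeEquivOfKerEq (φ : M →ₗ[R] E) (χ : M →ₗ[R] F)
    (h : LinearMap.ker φ = LinearMap.ker χ) : LinearMap.range φ ≃ₗ[R] LinearMap.range χ :=
  φ.quotKerEquivRange.symm ≪≫ₗ Submodule.quotEquivOfEq _ _ h ≪≫ₗ χ.quotKerEquivRange

theorem LinearMap.rangeEquivOfKerEq_apply (φ : M →ₗ[R] E) (χ : M →ₗ[R] F)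
    (h : LinearMap.ker φ = LinearMap.ker χ) (c : M) :
    (φ.rangeEquivOfKerEq χ h ⟨φ c, LinearMap.mem_range_self φ c⟩ : F) = χ c := by
  simp [LinearMap.rangeEquivOfKerEq, LinearMap.quotKerEquivRange_symm_apply_image]

end RangeEquiv

theorem sum_sum_gram_mul_eq_inner {d : ℕ} {F : Type*} [NormedAddCommGroup F] [InnerProductSpace ℝ F]
    (L : EuclideanSpace ℝ (Fin d) →ₗ[ℝ] F) (x y : EuclideanSpace ℝ (Fin d)) :
    ∑ i, ∑ j, Matrix.gram ℝ (fun i => L (EuclideanSpace.single i 1)) i j * x i * y j =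
      ⟪L x, L y⟫ := by
  have hL : ∀ z : EuclideanSpace ℝ (Fin d), ∑ i, z i • L (EuclideanSpace.single i 1) = L z := by
    intro z
    conv_rhs => rw [← (EuclideanSpace.basisFun (Fin d) ℝ).sum_repr z]
    simp [map_sum]
  rw [← hL x, ← hL y, ← Matrix.star_dotProduct_gram_mulVec]
  simp only [Matrix.gram_apply, dotProduct, Pi.star_apply, star_trivial, Matrix.mulVec,
    Finset.mul_sum]
  refine Finset.sum_congr rfl fun i _ => Finset.sum_congr rfl fun j _ => by ring

theorem exists_posDef_sum_mul_eq_inner {d : ℕ} {F : Type*} [NormedAddCommGroup F]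
    [InnerProductSpace ℝ F] (V : Submodule ℝ (EuclideanSpace ℝ (Fin d))) (ψ : V →ₗ[ℝ] F)
    (hψ : Function.Injective ψ) :
    ∃ Q : Matrix (Fin d) (Fin d) ℝ, Q.PosDef ∧
      ∀ x y : V, ∑ i, ∑ j, Q i j * (x : EuclideanSpace ℝ (Fin d)) i *
        (y : EuclideanSpace ℝ (Fin d)) j = ⟪ψ x, ψ y⟫ := by
  let L : EuclideanSpace ℝ (Fin d) →ₗ[ℝ] WithLp 2 (F × Vᗮ) :=
    (WithLp.linearEquiv 2 ℝ (F × Vᗮ)).symm.toLinearMap ∘ₗ (ψ.prodMap LinearMap.id) ∘ₗ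
      (V.prodEquivOfIsCompl Vᗮ V.isCompl_orthogonal).symm.toLinearMap
  have hL : Function.Injective L := by
    simp only [L, LinearMap.coe_comp, LinearEquiv.coe_coe]
    exact (LinearEquiv.injective _).comp
      ((hψ.prodMap Function.injective_id).comp (LinearEquiv.injective _))
  refine ⟨Matrix.gram ℝ (fun i => L (EuclideanSpace.single i 1)),
    Matrix.posDef_gram_of_linearIndependent ?_, fun x y => ?_⟩
  · have := (EuclideanSpace.basisFun (Fin d) ℝ).toBasis.linearIndependent.map'
      L (LinearMap.ker_eq_bot.mpr hL)
    simpa [Function.comp_def, EuclideanSpace.basisFun_apply] using this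
  · rw [sum_sum_gram_mul_eq_inner]
    simp [L]

theorem ker_linearCombination_eq_span_singleton {E : Type*} [AddCommGroup E] [Module ℝ E]
    {n : ℕ} {a : Fin (n + 1) → E}
    (hspan : Module.finrank ℝ (Submodule.span ℝ (Set.range a)) = n) {s : Fin (n + 1) → ℝ}
    (hs : s ≠ 0) (hrel : ∑ i, s i • a i = 0) :
    LinearMap.ker (Fintype.linearCombination ℝ a) = ℝ ∙ s := by
  have hrank := (Fintype.linearCombination ℝ a).finrank_range_add_finrank_ker
  rw [Fintype.range_linearCombination, hspan, Module.finrank_fin_fun] at hrank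
  refine (Submodule.eq_of_le_of_finrank_le ?_ ?_).symm
  · rw [Submodule.span_singleton_le_iff_mem, LinearMap.mem_ker,
      Fintype.linearCombination_apply, hrel]
  · rw [finrank_span_singleton hs]
    omega

-- `Pi.single k 1 ↦ (s k)⁻¹ • (eₖ - 𝟙 / n)`: up to the weights, the vertices of a regular simplex
-- centred at `0`.
noncomputable def scaledSimplexMap {n : ℕ} (s : Fin n → ℝ) :
    (Fin n → ℝ) →ₗ[ℝ] EuclideanSpace ℝ (Fin n) where
  toFun c := WithLp.toLp 2 fun j => c j / s j - (∑ k, c k / s k) / n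
  map_add' c c' := by
    ext j
    simp only [Pi.add_apply, add_div, Finset.sum_add_distrib, PiLp.add_apply]
    ring
  map_smul' t c := by
    ext j
    simp only [Pi.smul_apply, smul_eq_mul, mul_div_assoc, ← Finset.mul_sum, RingHom.id_apply,
      PiLp.smul_apply]
    ring

theorem scaledSimplexMap_apply {n : ℕ} (s : Fin n → ℝ) (c : Fin n → ℝ) (j : Fin n) :
    scaledSimplexMap s c j = c j / s j - (∑ k, c k / s k) / n := rfl

theorem ker_scaledSimplexMap {n : ℕ} {s : Fin n → ℝ} (hs : ∀ i, s i ≠ 0) :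
    LinearMap.ker (scaledSimplexMap s) = ℝ ∙ s := by
  ext c
  simp only [LinearMap.mem_ker, Submodule.mem_span_singleton]
  constructor
  · intro hc
    refine ⟨(∑ k, c k / s k) / n, funext fun j => ?_⟩
    have := congrArg (· j) hc
    simp only [scaledSimplexMap_apply, PiLp.zero_apply, sub_eq_zero] at this
    rw [Pi.smul_apply, smul_eq_mul, ← this, div_mul_cancel₀ _ (hs j)]
  · rintro ⟨t, rfl⟩
    ext j
    have hn : (n : ℝ) ≠ 0 := Nat.cast_ne_zero.mpr j.pos.ne'
    simp [scaledSimplexMap_apply, div_self (hs _), hn]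

theorem inner_scaledSimplexMap_single {n : ℕ} (s : Fin n → ℝ) {k l : Fin n} (hkl : k ≠ l) :
    ⟪scaledSimplexMap s (Pi.single k 1), scaledSimplexMap s (Pi.single l 1)⟫ =
      -(n : ℝ)⁻¹ * (s k)⁻¹ * (s l)⁻¹ := by
  have hn : (n : ℝ) ≠ 0 := Nat.cast_ne_zero.mpr k.pos.ne'
  simp only [PiLp.inner_apply, scaledSimplexMap_apply, RCLike.inner_apply, conj_trivial,
    Pi.single_apply, ite_div, zero_div, Finset.sum_ite_eq', Finset.mem_univ, if_true]
  simp only [sub_mul, mul_sub, Finset.sum_sub_distrib, ite_mul, mul_ite, zero_mul, mul_zero,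
    Finset.sum_ite_eq', Finset.mem_univ, if_true, if_neg hkl, Finset.sum_const, Finset.card_univ,
    Fintype.card_fin, nsmul_eq_mul]
  field_simp
  ring

theorem exists_posDef_sum_mul_eq_of_sum_smul_eq_zero {d n : ℕ}
    {a : Fin (n + 1) → EuclideanSpace ℝ (Fin d)}
    (hspan : Module.finrank ℝ (Submodule.span ℝ (Set.range a)) = n) {s : Fin (n + 1) → ℝ}
    (hs : ∀ i, s i ≠ 0) (hrel : ∑ i, s i • a i = 0) :
    ∃ Q : Matrix (Fin d) (Fin d) ℝ, Q.PosDef ∧ ∀ k l, k ≠ l →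
      ∑ i, ∑ j, Q i j * a k i * a l j = -((n + 1 : ℕ) : ℝ)⁻¹ * (s k)⁻¹ * (s l)⁻¹ := by
  let φ := Fintype.linearCombination ℝ a
  have hker : LinearMap.ker φ = LinearMap.ker (scaledSimplexMap s) := by
    rw [ker_scaledSimplexMap hs,
      ker_linearCombination_eq_span_singleton hspan (fun h => hs 0 (congrFun h 0)) hrel]
  let e := φ.rangeEquivOfKerEq (scaledSimplexMap s) hker
  obtain ⟨Q, hQ, hQe⟩ := exists_posDef_sum_mul_eq_inner _
    ((LinearMap.range _).subtype ∘ₗ e.toLinearMap) (Subtype.val_injective.comp e.injective)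
  refine ⟨Q, hQ, fun k l hkl => ?_⟩
  let v m : LinearMap.range φ := ⟨φ (Pi.single m 1), LinearMap.mem_range_self φ _⟩
  have hv : ∀ m, (v m : EuclideanSpace ℝ (Fin d)) = a m := by simp [v, φ]
  have hev : ∀ m, (e (v m) : EuclideanSpace ℝ (Fin (n + 1))) =
      scaledSimplexMap s (Pi.single m 1) := fun m => φ.rangeEquivOfKerEq_apply _ hker _
  rw [← hv k, ← hv l, hQe]
  simpa only [LinearMap.coe_comp, Function.comp_apply, LinearEquiv.coe_coe,
    Submodule.coe_subtype, hev] using inner_scaledSimplexMap_single s hkl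

section SumProdInner

variable {ι E : Type*} [Fintype ι] [DecidableEq ι] [NormedAddCommGroup E] [InnerProductSpace ℝ E]

noncomputable def sumProdInner (a : ι → E) (c : Finset ι → ℝ) (x : E) : ℝ :=
  ∑ T, c T * ∏ i ∈ T, ⟪a i, x⟫

theorem hasFDerivAt_sumProdInner (a : ι → E) (c : Finset ι → ℝ) (x : E) :
    HasFDerivAt (sumProdInner a c)
      (∑ T, c T • ∑ k ∈ T, (∏ i ∈ T.erase k, ⟪a i, x⟫) • innerSL ℝ (a k)) x :=
  HasFDerivAt.fun_sum fun T _ => (HasFDerivAt.finsetProd fun i _ =>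
    (innerSL ℝ (a i)).hasFDerivAt).const_mul (c T)

noncomputable def weightedCoeffs (w : ι → ℝ) (r : ℕ) (T : Finset ι) : ℝ :=
  if T.card = r then ∏ j ∈ Tᶜ, w j else 0

theorem prod_inner_eq_sumProdInner_weightedCoeffs (w : ι → ℝ) (a : ι → E) :
    (fun x => ∏ i, ⟪a i, x⟫) = sumProdInner a (weightedCoeffs w (Fintype.card ι)) := by
  funext x
  rw [sumProdInner, Finset.sum_eq_single Finset.univ]
  · simp [weightedCoeffs]
  · intro T _ hT
    simp [weightedCoeffs, Finset.card_eq_iff_eq_univ, hT]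
  · simp

theorem sumProdInner_smul_weightedCoeffs_one_eq_zero {a : ι → E} {s : ι → ℝ} (hs : ∀ i, s i ≠ 0)
    (hrel : ∑ i, s i • a i = 0) (C : ℝ) :
    sumProdInner a (C • weightedCoeffs (fun i => (s i)⁻¹) 1) = 0 := by
  funext x
  have hsingle : ∀ k, ∏ j ∈ {k}ᶜ, (s j)⁻¹ = s k * ∏ j, (s j)⁻¹ := fun k => by
    rw [Finset.compl_singleton, ← Finset.prod_erase_mul _ _ (Finset.mem_univ k), mul_left_comm,
      mul_inv_cancel₀ (hs k), mul_one]
  calc sumProdInner a (C • weightedCoeffs (fun i => (s i)⁻¹) 1) x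
      = ∑ k, C * (∏ j ∈ {k}ᶜ, (s j)⁻¹) * ⟪a k, x⟫ := by
        simp only [sumProdInner, Pi.smul_apply, weightedCoeffs, smul_eq_mul, mul_ite, mul_zero,
          ite_mul, zero_mul]
        rw [← Finset.sum_filter, ← Finset.powerset_univ, ← Finset.powersetCard_eq_filter,
          Finset.powersetCard_one, Finset.sum_map]
        simp
    _ = C * (∏ j, (s j)⁻¹) * ⟪∑ k, s k • a k, x⟫ := by
        simp only [hsingle, sum_inner, real_inner_smul_left, Finset.mul_sum]
        exact Finset.sum_congr rfl fun k _ => by ring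
    _ = 0 := by rw [hrel, inner_zero_left, mul_zero]

end SumProdInner

section Operator

variable {ι : Type*} [Fintype ι] [DecidableEq ι] {d : ℕ} {w : ι → ℝ}

theorem pd_sumProdInner (a : ι → EuclideanSpace ℝ (Fin d)) (c : Finset ι → ℝ) (j : Fin d) :
    pd j (sumProdInner a c) =
      sumProdInner a fun U => ∑ k ∈ Uᶜ, a k j * c (insert k U) := by
  funext x
  rw [pd, (hasFDerivAt_sumProdInner a c x).fderiv, sumProdInner]
  simp only [FunLike.coe_sum, FunLike.coe_smul, Finset.sum_apply, Pi.smul_apply,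
    innerSL_apply_apply, EuclideanSpace.inner_single_right, smul_eq_mul, Finset.mul_sum,
    Finset.sum_mul]
  rw [Finset.sum_sum_mem_eq_sum_sum_compl_insert]
  refine Finset.sum_congr rfl fun U _ => Finset.sum_congr rfl fun k hk => ?_
  rw [Finset.erase_insert (by simpa using hk)]
  simp only [Real.ringHom_apply]
  ring

theorem LQ_sumProdInner (Q : Matrix (Fin d) (Fin d) ℝ) (a : ι → EuclideanSpace ℝ (Fin d))
    (c : Finset ι → ℝ) :
    LQ Q (sumProdInner a c) = sumProdInner a fun U => ∑ l ∈ Uᶜ, ∑ k ∈ (insert l U)ᶜ,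
      (∑ i, ∑ j, Q i j * a l i * a k j) * c (insert k (insert l U)) := by
  funext x
  simp only [LQ, pd_sumProdInner, sumProdInner, Finset.mul_sum, Finset.sum_mul]
  rw [Finset.sum_comm_cycle]
  refine Finset.sum_congr rfl fun U _ => ?_
  rw [Finset.sum_sum_sum_sum_comm]
  refine Finset.sum_congr rfl fun l _ => Finset.sum_congr rfl fun k _ =>
    Finset.sum_congr rfl fun i _ => Finset.sum_congr rfl fun j _ => ?_
  ring

theorem LQ_sumProdInner_smul_weightedCoeffs {Q : Matrix (Fin d) (Fin d) ℝ}
    {a : ι → EuclideanSpace ℝ (Fin d)} {t : ℝ}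
    (hG : ∀ l k, l ≠ k → ∑ i, ∑ j, Q i j * a l i * a k j = t * w l * w k) (C : ℝ) (r : ℕ) :
    LQ Q (sumProdInner a (C • weightedCoeffs w (r + 2))) =
      sumProdInner a ((C * t * ((Fintype.card ι - r) * (Fintype.card ι - r - 1) : ℕ)) •
        weightedCoeffs w r) := by
  rw [LQ_sumProdInner]
  congr 1
  funext U
  simp only [Pi.smul_apply, smul_eq_mul, weightedCoeffs]
  by_cases hU : U.card = r
  · have hterm : ∀ l ∈ Uᶜ, ∀ k ∈ (insert l U)ᶜ,
        (∑ i, ∑ j, Q i j * a l i * a k j) *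
          (C * if (insert k (insert l U)).card = r + 2 then
            ∏ j ∈ (insert k (insert l U))ᶜ, w j else 0) = C * t * ∏ j ∈ Uᶜ, w j := by
      intro l hl k hk
      have hl' : l ∉ U := by simpa using hl
      have hk' : k ∉ insert l U := by simpa using hk
      have hkl : l ≠ k := fun h => hk' (h ▸ Finset.mem_insert_self l U)
      have hk'' : k ∈ Uᶜ.erase l := by simpa [eq_comm] using hk
      have hprod : ∏ j ∈ Uᶜ, w j = (∏ j ∈ (Uᶜ.erase l).erase k, w j) * w k * w l := by
        rw [Finset.prod_erase_mul _ _ hk'', Finset.prod_erase_mul _ _ hl]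
      rw [Finset.card_insert_of_notMem hk', Finset.card_insert_of_notMem hl', hU, if_pos rfl,
        hG l k hkl, Finset.compl_insert, Finset.compl_insert, hprod]
      ring
    rw [Finset.sum_congr rfl fun l hl => Finset.sum_congr rfl (hterm l hl), if_pos hU]
    have hcard : ∀ l ∈ Uᶜ, (insert l U)ᶜ.card = Fintype.card ι - r - 1 := fun l hl => by
      rw [Finset.card_compl, Finset.card_insert_of_notMem (by simpa using hl), hU, Nat.sub_sub]
    rw [Finset.sum_congr rfl fun l hl => by rw [Finset.sum_const, hcard l hl], Finset.sum_const,
      Finset.card_compl, hU]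
    simp only [nsmul_eq_mul, Nat.cast_mul]
    ring
  · rw [if_neg hU, mul_zero]
    refine Finset.sum_eq_zero fun l hl => Finset.sum_eq_zero fun k hk => ?_
    rw [Finset.card_insert_of_notMem (by simpa using hk),
      Finset.card_insert_of_notMem (by simpa using hl), if_neg (by omega), mul_zero, mul_zero]

theorem iterate_LQ_sumProdInner_weightedCoeffs {Q : Matrix (Fin d) (Fin d) ℝ}
    {a : ι → EuclideanSpace ℝ (Fin d)} {t : ℝ}
    (hG : ∀ l k, l ≠ k → ∑ i, ∑ j, Q i j * a l i * a k j = t * w l * w k) (m r : ℕ) :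
    ∃ C : ℝ, (LQ Q)^[m] (sumProdInner a (weightedCoeffs w (r + 2 * m))) =
      sumProdInner a (C • weightedCoeffs w r) := by
  induction m generalizing r with
  | zero => exact ⟨1, by simp⟩
  | succ m ih =>
    obtain ⟨C, hC⟩ := ih (r + 2)
    exact ⟨_, by rw [Function.iterate_succ_apply', show r + 2 * (m + 1) = r + 2 + 2 * m by ring,
      hC, LQ_sumProdInner_smul_weightedCoeffs hG]⟩

end Operator

theorem exists_posDef_gradient_iterate_prod_linear_eq_zero'_general (d q : ℕ)
    (hqe : Even q)
    (a : Fin (q + 1) → EuclideanSpace ℝ (Fin d))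
    (hspan : Module.finrank ℝ ↥(Submodule.span ℝ (Set.range a)) = q)
    (s : Fin (q + 1) → ℝ) (hs : ∀ i, s i ≠ 0) (hrel : ∑ i, s i • a i = 0) :
    ∃ Q : Matrix (Fin d) (Fin d) ℝ, Q.PosDef ∧
      ∀ u, gradient ((LQ Q)^[q / 2] fun v => ∏ i, ⟪a i, v⟫) u = 0 := by
  obtain ⟨Q, hQ, hG⟩ := exists_posDef_sum_mul_eq_of_sum_smul_eq_zero hspan hs hrel
  obtain ⟨C, hC⟩ := iterate_LQ_sumProdInner_weightedCoeffs hG (q / 2) 1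
  rw [show 1 + 2 * (q / 2) = Fintype.card (Fin (q + 1)) by
      rw [Nat.two_mul_div_two_of_even hqe, Fintype.card_fin, add_comm],
    ← prod_inner_eq_sumProdInner_weightedCoeffs,
    sumProdInner_smul_weightedCoeffs_one_eq_zero hs hrel] at hC
  exact ⟨Q, hQ, fun u => by rw [hC]; exact gradient_const u 0⟩

/-- If `a₁, …, a_{q+1}` span a `q`-dimensional subspace of `ℝ^d` (`d ≥ q`) and admit a linear
relation `∑ sᵢ aᵢ = 0` with all `sᵢ ≠ 0`, then there is a symmetric positive definite matrix
`Q` such that `∇(∇ᵀQ∇)^{q/2} ∏ᵢ (aᵢᵀu)` vanishes identically. -/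
theorem exists_posDef_gradient_iterate_prod_linear_eq_zero' (d q : ℕ) (hq : 2 ≤ q)
    (hqe : Even q) (hd : q ≤ d)
    (a : Fin (q + 1) → EuclideanSpace ℝ (Fin d))
    (hspan : Module.finrank ℝ ↥(Submodule.span ℝ (Set.range a)) = q)
    (s : Fin (q + 1) → ℝ) (hs : ∀ i, s i ≠ 0) (hrel : ∑ i, s i • a i = 0) :
    ∃ Q : Matrix (Fin d) (Fin d) ℝ, Q.PosDef ∧
      ∀ u, gradient ((LQ Q)^[q / 2] fun v => ∏ i, ⟪a i, v⟫) u = 0 :=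
  exists_posDef_gradient_iterate_prod_linear_eq_zero'_general d q hqe a hspan s hs hrel
end

section
/- Let d ≥ 1, let a ∈ ℝ^d be a nonzero vector, let R be a symmetric positive definite d×d real matrix, and let p : ℝ^d → ℝ be the cubic polynomial p(u) = (½ uᵀR u)(aᵀu). Then for every symmetric positive definite d×d real matrix Q one has the identity ∇(∇ᵀQ∇) p = (2RQ + tr(RQ)·I_d) a (a vector constant in u), and this vector is nonzero; hence ∇(∇ᵀQ∇)p cannot be made to vanish by any choice of positive definite Q. -/
/-!
Since `p` is cubic, `∇ᵀQ∇p` is linear: the Hessian of `p` at `u` is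
`⟪a, u⟫ R + (Ru) aᵀ + a (Ru)ᵀ`, and contracting it with the symmetric `Q` gives
`∇ᵀQ∇p (u) = ⟪(2RQ + tr(RQ) I) a, u⟫`, whose gradient is the constant vector `(2RQ + tr(RQ) I) a`.
This vector is nonzero: its dot product with `Qa` is `2 (Qa)ᵀR(Qa) + tr(RQ) aᵀQa > 0`,
because `tr(RQ) = tr(√R Q √R) ≥ 0`.
-/

open scoped RealInnerProductSpace Matrix

namespace Matrix

variable {n : Type*} [Fintype n]

lemma sum_sum_mul_mul_eq_dotProduct_mulVec {α : Type*} [CommSemiring α] (A : Matrix n n α)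
    (u w : n → α) : ∑ i, ∑ j, A i j * (u i * w j) = u ⬝ᵥ A *ᵥ w := by
  simp only [dotProduct, mulVec, Finset.mul_sum]
  exact Finset.sum_congr rfl fun i _ => Finset.sum_congr rfl fun j _ => by ring

lemma IsSymm.dotProduct_mulVec_comm {α : Type*} [CommSemiring α] {A : Matrix n n α}
    (hA : A.IsSymm) (u w : n → α) : u ⬝ᵥ A *ᵥ w = w ⬝ᵥ A *ᵥ u := by
  rw [dotProduct_mulVec, ← mulVec_transpose, hA.eq, dotProduct_comm]

@[fun_prop]
lemma differentiable_mulVec_apply {m : Type*} (A : Matrix m n ℝ) (i : m) :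
    Differentiable ℝ (fun w : n → ℝ => (A *ᵥ w) i) := by
  unfold mulVec dotProduct
  fun_prop

variable [DecidableEq n]

open scoped MatrixOrder in
lemma PosSemidef.trace_mul_nonneg {A B : Matrix n n ℝ} (hA : A.PosSemidef) (hB : B.PosSemidef) :
    0 ≤ (A * B).trace := by
  set S := CFC.sqrt A
  have hSS : S * S = A := CFC.sqrt_mul_sqrt_self A hA.nonneg
  have hS : Sᴴ = S := (nonneg_iff_posSemidef.mp (CFC.sqrt_nonneg A)).isHermitian
  have hSBS : (S * B * S).PosSemidef := by
    have := hB.conjTranspose_mul_mul_same S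
    rwa [hS] at this
  rw [← hSS, Matrix.mul_assoc, trace_mul_comm]
  exact hSBS.trace_nonneg

lemma PosDef.mul_add_smul_one_mulVec_ne_zero {A B : Matrix n n ℝ} (hA : A.PosDef)
    (hB : B.PosDef) {c : ℝ} (hc : 0 ≤ c) {v : n → ℝ} (hv : v ≠ 0) :
    (A * B + c • 1) *ᵥ v ≠ 0 := by
  intro h
  have hBv : 0 < v ⬝ᵥ B *ᵥ v := by simpa using hB.dotProduct_mulVec_pos hv
  have hBv0 : B *ᵥ v ≠ 0 := fun h0 => by simp [h0] at hBv
  have hABv : 0 < B *ᵥ v ⬝ᵥ A *ᵥ B *ᵥ v := by simpa using hA.dotProduct_mulVec_pos hBv0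
  have hzero : B *ᵥ v ⬝ᵥ (A * B + c • 1) *ᵥ v = 0 := by rw [h, dotProduct_zero]
  rw [add_mulVec, ← mulVec_mulVec, smul_mulVec, one_mulVec, dotProduct_add, dotProduct_smul,
    smul_eq_mul, dotProduct_comm (B *ᵥ v) v] at hzero
  nlinarith [mul_nonneg hc hBv.le]

end Matrix

section InnerProductSpace

variable {F : Type*} [NormedAddCommGroup F] [InnerProductSpace ℝ F]

@[fun_prop]
lemma differentiable_inner_left (a : F) : Differentiable ℝ (fun v : F => ⟪a, v⟫) :=
  (innerSL ℝ a).differentiable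

lemma gradient_inner_left [CompleteSpace F] (w u : F) : gradient (fun v => ⟪w, v⟫) u = w :=
  (hasGradientAt_iff_hasFDerivAt.mpr (InnerProductSpace.toDual ℝ F w).hasFDerivAt).gradient

end InnerProductSpace

section PartialDeriv

variable {d : ℕ} {f g : EuclideanSpace ℝ (Fin d) → ℝ} {x : EuclideanSpace ℝ (Fin d)} (j : Fin d)

lemma pd_eq_of_hasFDerivAt {f' : EuclideanSpace ℝ (Fin d) →L[ℝ] ℝ} (h : HasFDerivAt f f' x) :
    pd j f x = f' (EuclideanSpace.single j 1) := by
  rw [pd, h.fderiv]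

lemma pd_add (hf : DifferentiableAt ℝ f x) (hg : DifferentiableAt ℝ g x) :
    pd j (fun v => f v + g v) x = pd j f x + pd j g x :=
  pd_eq_of_hasFDerivAt j (hf.hasFDerivAt.add hg.hasFDerivAt)

lemma pd_mul (hf : DifferentiableAt ℝ f x) (hg : DifferentiableAt ℝ g x) :
    pd j (fun v => f v * g v) x = pd j f x * g x + f x * pd j g x := by
  rw [pd_eq_of_hasFDerivAt j (hf.hasFDerivAt.fun_mul hg.hasFDerivAt), pd, pd]
  simp only [add_apply, smul_apply, smul_eq_mul]
  ring

lemma pd_const_mul (c : ℝ) (hf : DifferentiableAt ℝ f x) :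
    pd j (fun v => c * f v) x = c * pd j f x :=
  pd_eq_of_hasFDerivAt j (hf.hasFDerivAt.const_mul c)

lemma pd_mul_const (c : ℝ) (hf : DifferentiableAt ℝ f x) :
    pd j (fun v => f v * c) x = pd j f x * c := by
  simp only [mul_comm _ c, pd_const_mul j c hf]

lemma pd_sum {ι : Type*} (s : Finset ι) {F : ι → EuclideanSpace ℝ (Fin d) → ℝ}
    (hF : ∀ i ∈ s, DifferentiableAt ℝ (F i) x) :
    pd j (fun v => ∑ i ∈ s, F i v) x = ∑ i ∈ s, pd j (F i) x := by
  rw [pd_eq_of_hasFDerivAt j (HasFDerivAt.fun_sum fun i hi => (hF i hi).hasFDerivAt)]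
  simp [pd]

lemma pd_coord (k : Fin d) : pd j (fun v => v k) x = if k = j then 1 else 0 := by
  rw [show (fun v : EuclideanSpace ℝ (Fin d) => v k) = EuclideanSpace.proj k from rfl,
    pd_eq_of_hasFDerivAt j (ContinuousLinearMap.hasFDerivAt _)]
  simp

lemma pd_dotProduct (c : Fin d → ℝ) : pd j (fun v => c ⬝ᵥ v.ofLp) x = c j := by
  simp only [dotProduct]
  rw [pd_sum _ _ fun k _ => by fun_prop]
  simp (disch := fun_prop) [pd_const_mul, pd_coord]

lemma pd_mulVec_apply (R : Matrix (Fin d) (Fin d) ℝ) (i : Fin d) :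
    pd j (fun v => (R *ᵥ v.ofLp) i) x = R i j :=
  pd_dotProduct j (R i)

lemma pd_inner_left (a : EuclideanSpace ℝ (Fin d)) : pd j (fun v => ⟪a, v⟫) x = a j := by
  simp only [EuclideanSpace.inner_eq_star_dotProduct, star_trivial, dotProduct_comm _ a.ofLp]
  exact pd_dotProduct j a.ofLp

lemma pd_quadForm {R : Matrix (Fin d) (Fin d) ℝ} (hR : R.IsSymm) :
    pd j (fun v => 1 / 2 * ∑ k, ∑ l, v k * R k l * v l) x = (R *ᵥ x.ofLp) j := by
  have hq : ∀ v : EuclideanSpace ℝ (Fin d),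
      ∑ k, ∑ l, v k * R k l * v l = ∑ k, v k * (R *ᵥ v.ofLp) k := by
    intro v
    simp [Matrix.mulVec, dotProduct, Finset.mul_sum, mul_assoc]
  simp only [hq]
  rw [pd_const_mul _ _ (by fun_prop), pd_sum _ _ fun k _ => by fun_prop]
  simp (disch := fun_prop) only [pd_mul, pd_coord, pd_mulVec_apply]
  have hvecMul : ∑ k, x k * R k j = (R *ᵥ x.ofLp) j := by
    simp only [Matrix.mulVec, dotProduct, hR.apply, mul_comm]
  simp only [ite_mul, one_mul, zero_mul, Finset.sum_add_distrib, Finset.sum_ite_eq', Finset.mem_univ,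
    if_true, hvecMul]
  ring

lemma pd_quadForm_mul_inner {R : Matrix (Fin d) (Fin d) ℝ} (hR : R.IsSymm)
    (a : EuclideanSpace ℝ (Fin d)) :
    pd j (fun v => (1 / 2 * ∑ k, ∑ l, v k * R k l * v l) * ⟪a, v⟫)
      = fun x => (R *ᵥ x.ofLp) j * ⟪a, x⟫ + (1 / 2 * ∑ k, ∑ l, x k * R k l * x l) * a j := by
  funext x
  rw [pd_mul j (by fun_prop) (by fun_prop), pd_quadForm j hR, pd_inner_left]

lemma pd_pd_quadForm_mul_inner {R : Matrix (Fin d) (Fin d) ℝ} (hR : R.IsSymm)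
    (a : EuclideanSpace ℝ (Fin d)) (i : Fin d) :
    pd i (pd j (fun v => (1 / 2 * ∑ k, ∑ l, v k * R k l * v l) * ⟪a, v⟫)) x
      = R j i * ⟪a, x⟫ + (R *ᵥ x.ofLp) j * a i + (R *ᵥ x.ofLp) i * a j := by
  rw [pd_quadForm_mul_inner j hR, pd_add i (by fun_prop) (by fun_prop),
    pd_mul i (by fun_prop) (by fun_prop), pd_mul_const i _ (by fun_prop),
    pd_mulVec_apply, pd_inner_left, pd_quadForm i hR]

end PartialDeriv

lemma LQ_quadForm_mul_inner {d : ℕ} {R Q : Matrix (Fin d) (Fin d) ℝ} (hR : R.IsSymm)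
    (hQ : Q.IsSymm) (a : EuclideanSpace ℝ (Fin d)) :
    LQ Q (fun v => (1 / 2 * ∑ k, ∑ l, v k * R k l * v l) * ⟪a, v⟫)
      = fun x => ⟪WithLp.toLp 2 (((2 : ℝ) • (R * Q) + (R * Q).trace • 1) *ᵥ a.ofLp), x⟫ := by
  funext x
  have htrace : ∑ i, ∑ j, Q i j * R j i = (R * Q).trace := by
    rw [Matrix.trace_mul_comm]
    simp [Matrix.trace, Matrix.mul_apply]
  have hC : (R *ᵥ x.ofLp) ⬝ᵥ Q *ᵥ a.ofLp = x.ofLp ⬝ᵥ R *ᵥ Q *ᵥ a.ofLp := by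
    rw [dotProduct_comm, hR.dotProduct_mulVec_comm]
  have hB : a.ofLp ⬝ᵥ Q *ᵥ R *ᵥ x.ofLp = x.ofLp ⬝ᵥ R *ᵥ Q *ᵥ a.ofLp := by
    rw [hQ.dotProduct_mulVec_comm, hC]
  have hexpand : ∀ i j, Q i j * (R j i * ⟪a, x⟫ + (R *ᵥ x.ofLp) j * a i + (R *ᵥ x.ofLp) i * a j)
      = Q i j * R j i * ⟪a, x⟫ + Q i j * (a i * (R *ᵥ x.ofLp) j)
        + Q i j * ((R *ᵥ x.ofLp) i * a j) :=
    fun i j => by ring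
  simp only [LQ, pd_pd_quadForm_mul_inner _ hR, hexpand, Finset.sum_add_distrib, ← Finset.sum_mul,
    htrace, Matrix.sum_sum_mul_mul_eq_dotProduct_mulVec, hB, hC]
  simp only [EuclideanSpace.inner_eq_star_dotProduct, star_trivial, Matrix.add_mulVec,
    Matrix.smul_mulVec, Matrix.one_mulVec, ← Matrix.mulVec_mulVec, dotProduct_add,
    dotProduct_smul, smul_eq_mul]
  ring

theorem gradient_LQ_quadratic_mul_linear_general (d : ℕ)
    (a : EuclideanSpace ℝ (Fin d)) (ha : a ≠ 0)
    (R : Matrix (Fin d) (Fin d) ℝ) (hR : R.PosDef)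
    (Q : Matrix (Fin d) (Fin d) ℝ) (hQ : Q.PosDef) :
    (∀ u, gradient
        (LQ Q fun v => (1 / 2 * ∑ k, ∑ l, v k * R k l * v l) * ⟪a, v⟫) u
        = (EuclideanSpace.equiv (Fin d) ℝ).symm
            ((((2 : ℝ) • (R * Q) + Matrix.trace (R * Q) • (1 : Matrix (Fin d) (Fin d) ℝ)).mulVec
              (fun k => a k)))) ∧
    (EuclideanSpace.equiv (Fin d) ℝ).symm
        ((((2 : ℝ) • (R * Q) + Matrix.trace (R * Q) • (1 : Matrix (Fin d) (Fin d) ℝ)).mulVec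
          (fun k => a k))) ≠ 0 := by
  have hLQ := LQ_quadForm_mul_inner (Matrix.isHermitian_iff_isSymm.mp hR.isHermitian)
    (Matrix.isHermitian_iff_isSymm.mp hQ.isHermitian) a
  refine ⟨fun u => by rw [hLQ]; exact gradient_inner_left _ u, ?_⟩
  have hM : ((2 : ℝ) • R * Q + (R * Q).trace • 1) *ᵥ a.ofLp ≠ 0 :=
    (hR.smul two_pos).mul_add_smul_one_mulVec_ne_zero hQ
      (hR.posSemidef.trace_mul_nonneg hQ.posSemidef) (by simpa using ha)
  rw [smul_mul_assoc] at hM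
  exact (map_ne_zero_iff _ (EuclideanSpace.equiv (Fin d) ℝ).symm.injective).mpr hM

/-- For the cubic `p(u) = (½ uᵀRu)(aᵀu)` with `a ≠ 0` and `R` positive definite, and any
positive definite `Q`, one has `∇(∇ᵀQ∇)p = (2RQ + tr(RQ)·I) a` everywhere, and this
vector is nonzero. -/
theorem gradient_LQ_quadratic_mul_linear (d : ℕ) (hd : 1 ≤ d)
    (a : EuclideanSpace ℝ (Fin d)) (ha : a ≠ 0)
    (R : Matrix (Fin d) (Fin d) ℝ) (hR : R.PosDef)
    (Q : Matrix (Fin d) (Fin d) ℝ) (hQ : Q.PosDef) :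
    (∀ u, gradient
        (LQ Q fun v => (1 / 2 * ∑ k, ∑ l, v k * R k l * v l) * ⟪a, v⟫) u
        = (EuclideanSpace.equiv (Fin d) ℝ).symm
            ((((2 : ℝ) • (R * Q) + Matrix.trace (R * Q) • (1 : Matrix (Fin d) (Fin d) ℝ)).mulVec
              (fun k => a k)))) ∧
    (EuclideanSpace.equiv (Fin d) ℝ).symm
        ((((2 : ℝ) • (R * Q) + Matrix.trace (R * Q) • (1 : Matrix (Fin d) (Fin d) ℝ)).mulVec
          (fun k => a k))) ≠ 0 :=
  gradient_LQ_quadratic_mul_linear_general d a ha R hR Q hQ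
end

section
/- Let p : ℝ² → ℝ be a homogeneous polynomial of degree 3. Then there exists a symmetric positive definite 2×2 real matrix Q with ∇(∇ᵀQ∇) p identically zero on ℝ² if and only if either p is identically zero, or p(u) = ∏_{i=1}^{3} (a_iᵀu) for some vectors a₁, a₂, a₃ ∈ ℝ², any two of which are linearly independent. -/
/-!
Write `p = a x³ + b x²y + c xy² + d y³`. Then `∇ᵀQ∇ p` is a linear form whose coefficients are
linear in `Q`, so `∇(∇ᵀQ∇)p ≡ 0` says that `Q` is apolar to `p`: the vector `(Q₀₀, Q₀₁, Q₁₁)` is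
orthogonal to two vectors made of the coefficients of `p`. Their cross product `w` satisfies
`w₁w₃ - w₂² = 3 disc p`, so when `disc p > 0` a multiple of `w` is a positive definite apolar `Q`.
Conversely every apolar `Q` satisfies `3 Q₀₀² disc p = w₁² det Q` (and the same with `Q₁₁`, `w₃`);
if `disc p ≤ 0` this forces `w₁ = w₃ = 0`, and then apolarity makes the quadratic form of `Q` vanish
at `(c, 3d)` and `(3a, b)`, so `p = 0`. Finally `disc p > 0` means exactly that `p` splits into
three pairwise independent real linear forms: a real cubic has a real root, the remaining quadratic
factor then has nonnegative discriminant, and the discriminant of `∏ ⟪aᵢ, u⟫` is the square of the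
product of the `2 × 2` minors of the `aᵢ`.
-/

open scoped RealInnerProductSpace Matrix

@[simp]
lemma fderiv_euclideanSpace_apply {ι : Type*} [Fintype ι] (x : EuclideanSpace ℝ ι) (i : ι) :
    fderiv ℝ (fun v : EuclideanSpace ℝ ι => v i) x = EuclideanSpace.proj i :=
  (PiLp.hasFDerivAt_apply 2 x i).fderiv

lemma gradient_eq_zero_iff_forall_pd {d : ℕ} (f : EuclideanSpace ℝ (Fin d) → ℝ)
    (x : EuclideanSpace ℝ (Fin d)) : gradient f x = 0 ↔ ∀ j, pd j f x = 0 := by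
  rw [gradient, LinearIsometryEquiv.map_eq_zero_iff]
  refine ⟨fun h j => by simp [pd, h], fun h => ?_⟩
  apply ContinuousLinearMap.coe_injective
  refine (EuclideanSpace.basisFun (Fin d) ℝ).toBasis.ext fun j => ?_
  simpa [pd] using h j

lemma Matrix.posDef_fin_two_iff {Q : Matrix (Fin 2) (Fin 2) ℝ} :
    Q.PosDef ↔ Q 1 0 = Q 0 1 ∧ 0 < Q 0 0 ∧ 0 < Q 0 0 * Q 1 1 - Q 0 1 ^ 2 := by
  have hquad : ∀ x : Fin 2 → ℝ, x ⬝ᵥ Q *ᵥ x =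
      Q 0 0 * x 0 ^ 2 + (Q 0 1 + Q 1 0) * x 0 * x 1 + Q 1 1 * x 1 ^ 2 := fun x => by
    simp [dotProduct, mulVec, Fin.sum_univ_two]; ring
  have hne : ∀ x : Fin 2 → ℝ, x ≠ 0 ↔ x 0 ≠ 0 ∨ x 1 ≠ 0 := fun x => by
    rw [Ne, funext_iff, Fin.forall_fin_two]; tauto
  simp only [posDef_iff_dotProduct_mulVec, IsHermitian.ext_iff, Fin.forall_fin_two, star_trivial,
    hquad, hne, true_and, and_true]
  constructor
  · rintro ⟨⟨h10, -⟩, hpos⟩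
    have h00 : 0 < Q 0 0 := by simpa using @hpos ![1, 0] (by simp)
    refine ⟨h10, h00, pos_of_mul_pos_right (a := Q 0 0) ?_ h00.le⟩
    have := @hpos ![Q 0 1, -Q 0 0] (by simp [h00.ne'])
    simp only [Matrix.cons_val_zero, Matrix.cons_val_one, Matrix.cons_val_fin_one, h10] at this
    linarith
  · rintro ⟨h10, h00, hdet⟩
    refine ⟨⟨h10, h10.symm⟩, fun x hx => pos_of_mul_pos_right (a := Q 0 0) ?_ h00.le⟩
    have hsq : Q 0 0 * (Q 0 0 * x 0 ^ 2 + (Q 0 1 + Q 1 0) * x 0 * x 1 + Q 1 1 * x 1 ^ 2) =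
        (Q 0 0 * x 0 + Q 0 1 * x 1) ^ 2 + (Q 0 0 * Q 1 1 - Q 0 1 ^ 2) * x 1 ^ 2 := by
      rw [h10]; ring
    rw [hsq]
    by_cases hx1 : x 1 = 0
    · have hx0 : x 0 ≠ 0 := by tauto
      simp only [hx1, mul_zero, add_zero, zero_pow two_ne_zero]
      positivity
    · positivity

lemma eq_zero_of_quadratic_eq_zero {x y z u v : ℝ} (hx : 0 < x) (hdet : 0 < x * z - y ^ 2)
    (h : x * u ^ 2 + 2 * y * u * v + z * v ^ 2 = 0) : u = 0 ∧ v = 0 := by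
  have hsq : (x * u + y * v) ^ 2 + (x * z - y ^ 2) * v ^ 2 = 0 := by linear_combination x * h
  have hv : (x * z - y ^ 2) * v ^ 2 = 0 := by
    apply le_antisymm _ (by positivity)
    linarith [sq_nonneg (x * u + y * v)]
  obtain rfl : v = 0 := by simpa [hdet.ne'] using hv
  exact ⟨by simpa [hx.ne'] using h, rfl⟩

lemma exists_root_cubic (b c d : ℝ) : ∃ t : ℝ, t ^ 3 + b * t ^ 2 + c * t + d = 0 := by
  set M := 1 + |b| + |c| + |d| with hM
  have hM₁ : 1 ≤ M := by linarith [abs_nonneg b, abs_nonneg c, abs_nonneg d]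
  have hdom : |b| * M ^ 2 + |c| * M + |d| < M ^ 3 := by
    nlinarith [abs_nonneg b, abs_nonneg c, abs_nonneg d]
  have hpos : 0 < M ^ 3 + b * M ^ 2 + c * M + d := by
    nlinarith [neg_abs_le b, neg_abs_le c, neg_abs_le d]
  have hneg : (-M) ^ 3 + b * (-M) ^ 2 + c * (-M) + d < 0 := by
    nlinarith [le_abs_self b, neg_abs_le c, le_abs_self d]
  obtain ⟨t, -, ht⟩ := intermediate_value_Icc (by linarith : -M ≤ M)
    (by fun_prop : Continuous fun t : ℝ => t ^ 3 + b * t ^ 2 + c * t + d).continuousOn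
    ⟨hneg.le, hpos.le⟩
  exact ⟨t, ht⟩

lemma exists_eq_mul_of_discrim_nonneg {q₀ q₁ q₂ : ℝ} (h : 0 ≤ discrim q₀ q₁ q₂) :
    ∃ γ δ γ' δ' : ℝ, q₀ = γ * γ' ∧ q₁ = γ * δ' + δ * γ' ∧ q₂ = δ * δ' := by
  by_cases hq₀ : q₀ = 0
  · exact ⟨0, 1, q₁, q₂, by simp [hq₀]⟩
  · obtain ⟨s, hs⟩ : ∃ s, s ^ 2 = discrim q₀ q₁ q₂ := ⟨√_, Real.sq_sqrt h⟩
    refine ⟨1, (q₁ - s) / (2 * q₀), q₀, (q₁ + s) / 2, by ring, by field_simp; ring, ?_⟩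
    rw [discrim] at hs
    field_simp
    linear_combination hs

def det2 (v w : EuclideanSpace ℝ (Fin 2)) : ℝ :=
  v 0 * w 1 - v 1 * w 0

lemma linearIndependent_pair_iff_det2_ne_zero (v w : EuclideanSpace ℝ (Fin 2)) :
    LinearIndependent ℝ ![v, w] ↔ det2 v w ≠ 0 := by
  have hrows : WithLp.linearEquiv 2 ℝ (Fin 2 → ℝ) ∘ ![v, w] = (!![v 0, v 1; w 0, w 1]).row := by
    ext i j
    fin_cases i <;> fin_cases j <;> rfl
  rw [← (WithLp.linearEquiv 2 ℝ (Fin 2 → ℝ)).toLinearMap.linearIndependent_iff (LinearEquiv.ker _),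
    LinearEquiv.coe_coe, hrows, Matrix.linearIndependent_rows_iff_isUnit,
    Matrix.isUnit_iff_isUnit_det, Matrix.det_fin_two_of, isUnit_iff_ne_zero, det2]

lemma det2_swap (v w : EuclideanSpace ℝ (Fin 2)) : det2 w v = -det2 v w := by
  simp only [det2]
  ring

lemma forall_linearIndependent_pair_iff (a : Fin 3 → EuclideanSpace ℝ (Fin 2)) :
    (∀ i j, i ≠ j → LinearIndependent ℝ ![a i, a j]) ↔
      det2 (a 0) (a 1) * det2 (a 0) (a 2) * det2 (a 1) (a 2) ≠ 0 := by
  simp only [linearIndependent_pair_iff_det2_ne_zero, mul_ne_zero_iff]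
  refine ⟨fun h => ⟨⟨h 0 1 (by decide), h 0 2 (by decide)⟩, h 1 2 (by decide)⟩, ?_⟩
  rintro ⟨⟨h01, h02⟩, h12⟩ i j hij
  fin_cases i <;> fin_cases j <;>
    simp_all [det2_swap (a 0) (a 1), det2_swap (a 0) (a 2), det2_swap (a 1) (a 2)]

namespace Cubic

def form (P : Cubic ℝ) (u : EuclideanSpace ℝ (Fin 2)) : ℝ :=
  P.a * u 0 ^ 3 + P.b * u 0 ^ 2 * u 1 + P.c * u 0 * u 1 ^ 2 + P.d * u 1 ^ 3

lemma zero_def : (0 : Cubic ℝ) = ⟨0, 0, 0, 0⟩ :=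
  rfl

/-- The operator `Q(∂) = ∑ Qᵢⱼ ∂ᵢ∂ⱼ` annihilates `P.form` (classical apolarity). -/
def IsApolar (P : Cubic ℝ) (Q : Matrix (Fin 2) (Fin 2) ℝ) : Prop :=
  3 * P.a * Q 0 0 + P.b * (Q 0 1 + Q 1 0) + P.c * Q 1 1 = 0 ∧
    P.b * Q 0 0 + P.c * (Q 0 1 + Q 1 0) + 3 * P.d * Q 1 1 = 0

lemma LQ_form (P : Cubic ℝ) (Q : Matrix (Fin 2) (Fin 2) ℝ) :
    LQ Q P.form = fun x => 2 * ((3 * P.a * Q 0 0 + P.b * (Q 0 1 + Q 1 0) + P.c * Q 1 1) * x 0 +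
      (P.b * Q 0 0 + P.c * (Q 0 1 + Q 1 0) + 3 * P.d * Q 1 1) * x 1) := by
  ext x
  unfold LQ pd form
  simp (disch := fun_prop) [Fin.sum_univ_two, fderiv_fun_add, fderiv_fun_mul, fderiv_fun_pow]
  ring

lemma forall_gradient_LQ_form_eq_zero_iff (P : Cubic ℝ) (Q : Matrix (Fin 2) (Fin 2) ℝ) :
    (∀ x, gradient (LQ Q P.form) x = 0) ↔ P.IsApolar Q := by
  simp only [gradient_eq_zero_iff_forall_pd, Fin.forall_fin_two, LQ_form, pd]
  simp (disch := fun_prop) [fderiv_fun_add, fderiv_fun_mul, IsApolar]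

lemma eq_zero_or_discr_pos_of_isApolar {P : Cubic ℝ} {x y z : ℝ} (hx : 0 < x)
    (hdet : 0 < x * z - y ^ 2) (hP : P.IsApolar !![x, y; y, z]) : P = 0 ∨ 0 < P.discr := by
  obtain ⟨a, b, c, d⟩ := P
  obtain ⟨e₁, e₂⟩ := hP
  simp only [Matrix.of_apply, Matrix.cons_val', Matrix.cons_val_zero, Matrix.cons_val_one,
    Matrix.empty_val', Matrix.cons_val_fin_one] at e₁ e₂
  rw [or_iff_not_imp_right, not_lt]
  intro hdisc
  -- the cross product of the coefficient vectors `(3a, 2b, c)` and `(b, 2c, 3d)` of `e₁`, `e₂`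
  set w₁ := 6 * b * d - 2 * c ^ 2
  set w₂ := b * c - 9 * a * d
  set w₃ := 6 * a * c - 2 * b ^ 2
  have hw : ∀ t w, 3 * t ^ 2 * discr ⟨a, b, c, d⟩ = w ^ 2 * (x * z - y ^ 2) → w = 0 := by
    intro t w htw
    have : w ^ 2 * (x * z - y ^ 2) = 0 :=
      le_antisymm (htw ▸ mul_nonpos_of_nonneg_of_nonpos (by positivity) hdisc) (by positivity)
    simpa [hdet.ne'] using this
  have hw₁ : w₁ = 0 := hw x w₁ <| by
    simp only [discr]
    linear_combination (2 * c * x * w₁ + 3 * d * (x * w₂ + y * w₁)) * e₁ -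
      (2 * b * x * w₁ + c * (x * w₂ + y * w₁)) * e₂
  have hw₃ : w₃ = 0 := hw z w₃ <| by
    simp only [discr]
    linear_combination (-(2 * c * z * w₃) - b * (z * w₂ + y * w₃)) * e₁ +
      (2 * b * z * w₃ + 3 * a * (z * w₂ + y * w₃)) * e₂
  obtain ⟨rfl, hd⟩ := eq_zero_of_quadratic_eq_zero (u := c) (v := 3 * d) hx hdet
    (by linear_combination 3 * d * e₂ - x / 2 * hw₁)
  obtain ⟨ha, rfl⟩ := eq_zero_of_quadratic_eq_zero (u := 3 * a) (v := b) hx hdet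
    (by linear_combination 3 * a * e₁ - z / 2 * hw₃)
  obtain rfl : a = 0 := by linarith
  obtain rfl : d = 0 := by linarith
  rfl

lemma exists_isApolar_of_discr_pos {P : Cubic ℝ} (h : 0 < P.discr) :
    ∃ x y z : ℝ, 0 < x ∧ 0 < x * z - y ^ 2 ∧ P.IsApolar !![x, y; y, z] := by
  obtain ⟨a, b, c, d⟩ := P
  set w₁ := 6 * b * d - 2 * c ^ 2
  set w₂ := b * c - 9 * a * d
  set w₃ := 6 * a * c - 2 * b ^ 2
  have hw : w₁ * w₃ - w₂ ^ 2 = 3 * discr ⟨a, b, c, d⟩ := by simp only [discr]; ring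
  have hw₁ : w₁ ≠ 0 := by
    rintro h₁
    rw [h₁, zero_mul, zero_sub] at hw
    nlinarith [sq_nonneg w₂]
  -- `w` solves the apolarity equations; the factor `w₁` makes the top-left entry positive.
  refine ⟨w₁ * w₁, w₁ * w₂, w₁ * w₃, mul_self_pos.mpr hw₁, ?_, ?_⟩
  · have : w₁ * w₁ * (w₁ * w₃) - (w₁ * w₂) ^ 2 = w₁ ^ 2 * (3 * discr ⟨a, b, c, d⟩) := by
      rw [← hw]; ring
    rw [this]
    positivity
  · simp only [IsApolar, Matrix.of_apply, Matrix.cons_val', Matrix.cons_val_zero,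
      Matrix.cons_val_one, Matrix.empty_val', Matrix.cons_val_fin_one]
    constructor <;> ring

theorem exists_posDef_isApolar_iff (P : Cubic ℝ) :
    (∃ Q : Matrix (Fin 2) (Fin 2) ℝ, Q.PosDef ∧ P.IsApolar Q) ↔ P = 0 ∨ 0 < P.discr := by
  constructor
  · rintro ⟨Q, hQ, hPQ⟩
    obtain ⟨h10, h00, hdet⟩ := Matrix.posDef_fin_two_iff.mp hQ
    rw [Matrix.eta_fin_two Q, h10] at hPQ
    exact eq_zero_or_discr_pos_of_isApolar h00 hdet hPQ
  · rintro (rfl | h)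
    · exact ⟨1, Matrix.PosDef.one, by simp [IsApolar, zero_def]⟩
    · obtain ⟨x, y, z, hx, hdet, hP⟩ := exists_isApolar_of_discr_pos h
      exact ⟨_, Matrix.posDef_fin_two_iff.mpr ⟨rfl, hx, hdet⟩, hP⟩

lemma form_injective : Function.Injective form := by
  intro P R h
  have key : ∀ x y : ℝ, P.form !₂[x, y] = R.form !₂[x, y] := fun x y => congrFun h _
  have h₁ := key 1 0
  have h₂ := key 0 1
  have h₃ := key 1 1
  have h₄ := key 1 (-1)
  simp only [form, Matrix.cons_val_zero, Matrix.cons_val_one,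
    Matrix.cons_val_fin_one] at h₁ h₂ h₃ h₄
  ext <;> linarith

lemma form_zero (u : EuclideanSpace ℝ (Fin 2)) : (0 : Cubic ℝ).form u = 0 := by
  simp [form, zero_def]

lemma forall_form_eq_zero_iff (P : Cubic ℝ) : (∀ u, P.form u = 0) ↔ P = 0 := by
  refine ⟨fun h => form_injective (funext fun u => by rw [h, form_zero]), ?_⟩
  rintro rfl
  exact form_zero

def prodLinear (a : Fin 3 → EuclideanSpace ℝ (Fin 2)) : Cubic ℝ :=
  ⟨a 0 0 * a 1 0 * a 2 0,
    a 0 0 * a 1 0 * a 2 1 + a 0 0 * a 1 1 * a 2 0 + a 0 1 * a 1 0 * a 2 0,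
    a 0 0 * a 1 1 * a 2 1 + a 0 1 * a 1 0 * a 2 1 + a 0 1 * a 1 1 * a 2 0,
    a 0 1 * a 1 1 * a 2 1⟩

lemma form_prodLinear (a : Fin 3 → EuclideanSpace ℝ (Fin 2)) (u : EuclideanSpace ℝ (Fin 2)) :
    (prodLinear a).form u = ∏ i, ⟪a i, u⟫ := by
  simp only [form, prodLinear, Fin.prod_univ_three, PiLp.inner_apply, Fin.sum_univ_two,
    RCLike.inner_apply, conj_trivial]
  ring

lemma discr_prodLinear (a : Fin 3 → EuclideanSpace ℝ (Fin 2)) :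
    (prodLinear a).discr = (det2 (a 0) (a 1) * det2 (a 0) (a 2) * det2 (a 1) (a 2)) ^ 2 := by
  simp only [discr, prodLinear, det2]
  ring

lemma exists_eq_linear_mul_quadratic (P : Cubic ℝ) :
    ∃ α β q₀ q₁ q₂ : ℝ, P = ⟨α * q₀, α * q₁ + β * q₀, α * q₂ + β * q₁, β * q₂⟩ := by
  obtain ⟨a, b, c, d⟩ := P
  by_cases ha : a = 0
  · exact ⟨0, 1, b, c, d, by simp [ha]⟩
  · obtain ⟨r, hr⟩ := exists_root_cubic (b / a) (c / a) (d / a)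
    obtain rfl : d = -(a * r ^ 3 + b * r ^ 2 + c * r) := by
      field_simp at hr; linear_combination hr
    refine ⟨1, -r, a, b + a * r, c + b * r + a * r ^ 2, ?_⟩
    ext <;> simp only <;> ring

lemma discr_linear_mul_quadratic (α β q₀ q₁ q₂ : ℝ) :
    discr ⟨α * q₀, α * q₁ + β * q₀, α * q₂ + β * q₁, β * q₂⟩ =
      discrim q₀ q₁ q₂ * (q₀ * β ^ 2 - q₁ * α * β + q₂ * α ^ 2) ^ 2 := by
  simp only [discr, discrim]
  ring

lemma exists_eq_prodLinear_of_discr_pos {P : Cubic ℝ} (h : 0 < P.discr) :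
    ∃ a, P = prodLinear a := by
  obtain ⟨α, β, q₀, q₁, q₂, rfl⟩ := P.exists_eq_linear_mul_quadratic
  rw [discr_linear_mul_quadratic] at h
  obtain ⟨γ, δ, γ', δ', rfl, rfl, rfl⟩ :=
    exists_eq_mul_of_discrim_nonneg (pos_of_mul_pos_left h (sq_nonneg _)).le
  refine ⟨![!₂[α, β], !₂[γ, δ], !₂[γ', δ']], ?_⟩
  ext <;> simp [prodLinear] <;> ring

theorem discr_pos_iff_exists_form_eq_prod (P : Cubic ℝ) :
    0 < P.discr ↔ ∃ a : Fin 3 → EuclideanSpace ℝ (Fin 2),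
      (∀ i j, i ≠ j → LinearIndependent ℝ ![a i, a j]) ∧ ∀ u, P.form u = ∏ i, ⟪a i, u⟫ := by
  simp_rw [forall_linearIndependent_pair_iff, ← form_prodLinear, ← funext_iff,
    form_injective.eq_iff]
  constructor
  · intro h
    obtain ⟨a, rfl⟩ := exists_eq_prodLinear_of_discr_pos h
    rw [discr_prodLinear] at h
    exact ⟨a, fun h0 => by simp [h0] at h, rfl⟩
  · rintro ⟨a, ha, rfl⟩
    rw [discr_prodLinear]
    exact sq_pos_of_ne_zero ha

end Cubic

/-- For a homogeneous cubic `p` on `ℝ²`, there is a symmetric positive definite `Q` with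
`∇(∇ᵀQ∇)p ≡ 0` iff `p ≡ 0` or `p(u) = ∏_{i=1}^3 (aᵢᵀu)` with any two of `a₁, a₂, a₃`
linearly independent. -/
theorem exists_posDef_gradient_LQ_eq_zero_iff_cubic (p : EuclideanSpace ℝ (Fin 2) → ℝ)
    (hp : ∃ c : Fin 4 → ℝ, ∀ u : EuclideanSpace ℝ (Fin 2),
      p u = c 0 * u 0 ^ 3 + c 1 * u 0 ^ 2 * u 1 + c 2 * u 0 * u 1 ^ 2 + c 3 * u 1 ^ 3) :
    (∃ Q : Matrix (Fin 2) (Fin 2) ℝ, Q.PosDef ∧ ∀ u, gradient (LQ Q p) u = 0) ↔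
      ((∀ u, p u = 0) ∨
        ∃ a : Fin 3 → EuclideanSpace ℝ (Fin 2),
          (∀ i j, i ≠ j → LinearIndependent ℝ ![a i, a j]) ∧
          ∀ u, p u = ∏ i, ⟪a i, u⟫) := by
  obtain ⟨c, hc⟩ := hp
  obtain rfl : p = Cubic.form ⟨c 0, c 1, c 2, c 3⟩ := funext hc
  simp only [Cubic.forall_gradient_LQ_form_eq_zero_iff, Cubic.exists_posDef_isApolar_iff,
    Cubic.forall_form_eq_zero_iff, Cubic.discr_pos_iff_exists_form_eq_prod]
end

section
/- Let q ≥ 2 be an even integer, d ≥ 2, let a₁, a₂ ∈ ℝ^d be linearly independent vectors, and let Q be a symmetric positive definite d×d real matrix. Then for the polynomial p(u) = (a₁ᵀu)^q (a₂ᵀu) one has, at every u ∈ ℝ^d, the identity ∇(∇ᵀQ∇)^{q/2} p = q·q!·(a₁ᵀQa₁)^{q/2−1}(a₁ᵀQa₂)·a₁ + q!·(a₁ᵀQa₁)^{q/2}·a₂, and in particular this vector is nonzero. -/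
open scoped RealInnerProductSpace Matrix

/-!
On products of powers of two linear forms, `u ↦ c ⟪a, u⟫ⁿ ⟪b, u⟫ᵐ`, the operator `∇ᵀQ∇` acts by
an explicit three-term rule: the total degree drops by two and the coefficients pick up `aᵀQa`,
`aᵀQb + bᵀQa` and `bᵀQb`. Starting from `⟪a₁, u⟫^q ⟪a₂, u⟫`, each application lowers the power of
`⟪a₁, u⟫`, so after `q/2` steps only the linear function `u ↦ ⟪c₁ • a₁ + c₂ • a₂, u⟫` is left,
with coefficients tracked by induction. Its gradient is `c₁ • a₁ + c₂ • a₂`, and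
`c₂ = q! (a₁ᵀQa₁)^{q/2}` is nonzero because `Q` is positive definite, so linear independence
of `a₁, a₂` rules out a vanishing gradient.
-/

open scoped Nat

section

variable {d : ℕ}

theorem pd_add_s10 {f g : EuclideanSpace ℝ (Fin d) → ℝ} (hf : Differentiable ℝ f)
    (hg : Differentiable ℝ g) (j : Fin d) : pd j (f + g) = pd j f + pd j g := by
  funext u
  simp only [pd, Pi.add_apply, fderiv_add (hf u) (hg u), add_apply]

theorem ContDiff.pd {n : WithTop ℕ∞} {f : EuclideanSpace ℝ (Fin d) → ℝ}
    (hf : ContDiff ℝ (n + 1) f) (j : Fin d) : ContDiff ℝ n (pd j f) :=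
  (hf.fderiv_right le_rfl).clm_apply contDiff_const

theorem LQ_add (Q : Matrix (Fin d) (Fin d) ℝ) {f g : EuclideanSpace ℝ (Fin d) → ℝ}
    (hf : ContDiff ℝ 2 f) (hg : ContDiff ℝ 2 g) : LQ Q (f + g) = LQ Q f + LQ Q g := by
  have hpd : ∀ j, pd j (f + g) = pd j f + pd j g := pd_add_s10 (hf.differentiable two_ne_zero)
    (hg.differentiable two_ne_zero)
  funext x
  simp only [LQ, Pi.add_apply, hpd, pd_add_s10 ((ContDiff.pd (n := 1) hf _).differentiable one_ne_zero)
    ((ContDiff.pd (n := 1) hg _).differentiable one_ne_zero), mul_add, Finset.sum_add_distrib]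

theorem Matrix.IsSymm.dotProduct_mulVec_comm_s10 {n : Type*} [Fintype n]
    {Q : Matrix n n ℝ} (hQ : Q.IsSymm) (v w : n → ℝ) : v ⬝ᵥ Q *ᵥ w = w ⬝ᵥ Q *ᵥ v := by
  rw [Matrix.dotProduct_mulVec, ← Matrix.mulVec_transpose, hQ.eq, dotProduct_comm]

theorem gradient_inner_right {F : Type*} [NormedAddCommGroup F] [InnerProductSpace ℝ F]
    [CompleteSpace F] (v u : F) : gradient (fun w => ⟪v, w⟫) u = v :=
  (hasGradientAt_iff_hasFDerivAt.mpr (innerSL ℝ v).hasFDerivAt).gradient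

variable (a b : EuclideanSpace ℝ (Fin d))

noncomputable def linMonomial (c : ℝ) (n m : ℕ) : EuclideanSpace ℝ (Fin d) → ℝ :=
  fun u => c * ⟪a, u⟫ ^ n * ⟪b, u⟫ ^ m

theorem contDiff_linMonomial (c : ℝ) (n m : ℕ) {k : WithTop ℕ∞} :
    ContDiff ℝ k (linMonomial a b c n m) :=
  (contDiff_const.mul ((innerSL ℝ a).contDiff.pow n)).mul ((innerSL ℝ b).contDiff.pow m)

theorem linMonomial_zero_coeff (n m : ℕ) : linMonomial a b 0 n m = 0 := by
  funext u
  simp [linMonomial]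

theorem hasFDerivAt_linMonomial (c : ℝ) (n m : ℕ) (u : EuclideanSpace ℝ (Fin d)) :
    HasFDerivAt (linMonomial a b c n m)
      ((c * n * ⟪a, u⟫ ^ (n - 1) * ⟪b, u⟫ ^ m) • innerSL ℝ a
        + (c * m * ⟪a, u⟫ ^ n * ⟪b, u⟫ ^ (m - 1)) • innerSL ℝ b) u := by
  have hinner (v : EuclideanSpace ℝ (Fin d)) :
      HasFDerivAt (fun w => ⟪v, w⟫) (innerSL ℝ v) u := (innerSL ℝ v).hasFDerivAt
  refine ((((hinner a).pow n).const_mul c).mul ((hinner b).pow m)).congr_fderiv ?_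
  ext w
  simp only [add_apply, smul_apply, innerSL_apply_apply, smul_eq_mul, nsmul_eq_mul]
  ring

theorem pd_linMonomial (c : ℝ) (n m : ℕ) (j : Fin d) :
    pd j (linMonomial a b c n m)
      = linMonomial a b (c * n * a j) (n - 1) m + linMonomial a b (c * m * b j) n (m - 1) := by
  funext u
  simp only [pd, (hasFDerivAt_linMonomial a b c n m u).fderiv, linMonomial, Pi.add_apply,
    add_apply, smul_apply, smul_eq_mul, innerSL_apply_apply,
    EuclideanSpace.inner_single_right, conj_trivial]
  ring

theorem dotProduct_mulVec_eq_sum_sum {n : Type*} [Fintype n] (Q : Matrix n n ℝ) (v w : n → ℝ) :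
    v ⬝ᵥ Q *ᵥ w = ∑ i, ∑ j, Q i j * (v i * w j) := by
  simp only [dotProduct, Matrix.mulVec, Finset.mul_sum]
  exact Finset.sum_congr rfl fun i _ => Finset.sum_congr rfl fun j _ => by ring

theorem LQ_linMonomial (Q : Matrix (Fin d) (Fin d) ℝ) (c : ℝ) (n m : ℕ) :
    LQ Q (linMonomial a b c n m)
      = linMonomial a b (c * n * (n - 1 : ℕ) * (a.ofLp ⬝ᵥ Q *ᵥ a.ofLp)) (n - 2) m
        + linMonomial a b (c * n * m * (a.ofLp ⬝ᵥ Q *ᵥ b.ofLp + b.ofLp ⬝ᵥ Q *ᵥ a.ofLp))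
            (n - 1) (m - 1)
        + linMonomial a b (c * m * (m - 1 : ℕ) * (b.ofLp ⬝ᵥ Q *ᵥ b.ofLp)) n (m - 2) := by
  have hpd2 (i j : Fin d) : pd i (pd j (linMonomial a b c n m))
      = linMonomial a b (c * n * a j * (n - 1 : ℕ) * a i) (n - 1 - 1) m
        + linMonomial a b (c * n * a j * m * b i) (n - 1) (m - 1)
        + (linMonomial a b (c * m * b j * n * a i) (n - 1) (m - 1)
          + linMonomial a b (c * m * b j * (m - 1 : ℕ) * b i) n (m - 1 - 1)) := by
    rw [pd_linMonomial, pd_add_s10 ((contDiff_linMonomial ..).differentiable one_ne_zero)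
      ((contDiff_linMonomial ..).differentiable one_ne_zero), pd_linMonomial, pd_linMonomial]
  funext x
  simp only [LQ, hpd2, linMonomial, Pi.add_apply, dotProduct_mulVec_eq_sum_sum, Nat.sub_sub,
    Finset.mul_sum, Finset.sum_mul, ← Finset.sum_add_distrib]
  exact Finset.sum_congr rfl fun i _ => Finset.sum_congr rfl fun j _ => by ring

theorem linMonomial_add_linMonomial (c c' : ℝ) (n m : ℕ) :
    linMonomial a b c n m + linMonomial a b c' n m = linMonomial a b (c + c') n m := by
  funext u
  simp only [linMonomial, Pi.add_apply]
  ring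

theorem linMonomial_zero_one_add_linMonomial_one_zero (c c' : ℝ) :
    linMonomial a b c 0 1 + linMonomial a b c' 1 0 = fun u => ⟪c' • a + c • b, u⟫ := by
  funext u
  simp only [linMonomial, Pi.add_apply, inner_add_left, real_inner_smul_left]
  ring

variable {Q : Matrix (Fin d) (Fin d) ℝ}

theorem LQ_linMonomial_add_two_one (hQ : Q.IsSymm) (c : ℝ) (n : ℕ) :
    LQ Q (linMonomial a b c (n + 2) 1)
      = linMonomial a b (c * (n + 2) * (n + 1) * (a.ofLp ⬝ᵥ Q *ᵥ a.ofLp)) n 1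
        + linMonomial a b (2 * c * (n + 2) * (a.ofLp ⬝ᵥ Q *ᵥ b.ofLp)) (n + 1) 0 := by
  rw [LQ_linMonomial, hQ.dotProduct_mulVec_comm_s10 b.ofLp]
  funext u
  simp only [linMonomial, Pi.add_apply, Nat.add_sub_cancel, Nat.add_one_sub_one, tsub_self,
    Nat.sub_eq_zero_of_le one_le_two, Nat.cast_add, Nat.cast_ofNat, Nat.cast_one, Nat.cast_zero]
  ring

theorem LQ_linMonomial_add_two_zero (c : ℝ) (n : ℕ) :
    LQ Q (linMonomial a b c (n + 2) 0)
      = linMonomial a b (c * (n + 2) * (n + 1) * (a.ofLp ⬝ᵥ Q *ᵥ a.ofLp)) n 0 := by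
  rw [LQ_linMonomial]
  funext u
  simp only [linMonomial, Pi.add_apply, Nat.add_sub_cancel, Nat.add_one_sub_one, zero_tsub,
    Nat.cast_add, Nat.cast_ofNat, Nat.cast_one, Nat.cast_zero]
  ring

theorem iterate_LQ_linMonomial (hQ : Q.IsSymm) (k n : ℕ) :
    (LQ Q)^[k] (linMonomial a b 1 (n + 2 * k) 1)
      = linMonomial a b ((n + 2 * k)! / n ! * (a.ofLp ⬝ᵥ Q *ᵥ a.ofLp) ^ k) n 1
        + linMonomial a b (2 * k * (n + 2 * k)! / (n + 1)! * (a.ofLp ⬝ᵥ Q *ᵥ a.ofLp) ^ (k - 1)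
            * (a.ofLp ⬝ᵥ Q *ᵥ b.ofLp)) (n + 1) 0 := by
  induction k generalizing n with
  | zero => simp [linMonomial_zero_coeff, div_self (by positivity : (n ! : ℝ) ≠ 0)]
  | succ k ih =>
    -- `k - 1` truncates at `k = 0`, where the factor `k` kills the term anyway
    have hpow (s : ℝ) : (k : ℝ) * s ^ (k - 1) * s = k * s ^ k := by
      rcases k with _ | k <;> simp [pow_succ, mul_assoc]
    rw [Function.iterate_succ_apply', show n + 2 * (k + 1) = n + 2 + 2 * k by ring, ih,
      LQ_add Q (contDiff_linMonomial ..) (contDiff_linMonomial ..),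
      LQ_linMonomial_add_two_one a b hQ, LQ_linMonomial_add_two_zero, add_assoc,
      linMonomial_add_linMonomial]
    congr 2
    · rw [Nat.factorial_succ (n + 1), Nat.factorial_succ n]
      push_cast
      field_simp
      ring
    · rw [Nat.factorial_succ (n + 2), Nat.factorial_succ (n + 1)]
      push_cast
      field_simp
      linear_combination
        ((n + 2) * (n + 3) * (a.ofLp ⬝ᵥ Q *ᵥ b.ofLp)) * hpow (a.ofLp ⬝ᵥ Q *ᵥ a.ofLp)

theorem iterate_LQ_pow_mul_of_even (hQ : Q.IsSymm) {q : ℕ} (hq : Even q) :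
    (LQ Q)^[q / 2] (fun v => ⟪a, v⟫ ^ q * ⟪b, v⟫)
      = fun u => ⟪((q : ℝ) * q ! * (a.ofLp ⬝ᵥ Q *ᵥ a.ofLp) ^ (q / 2 - 1)
            * (a.ofLp ⬝ᵥ Q *ᵥ b.ofLp)) • a + ((q ! : ℝ) * (a.ofLp ⬝ᵥ Q *ᵥ a.ofLp) ^ (q / 2)) • b,
          u⟫ := by
  obtain ⟨k, rfl⟩ := hq
  have hp : (fun v => ⟪a, v⟫ ^ (k + k) * ⟪b, v⟫) = linMonomial a b 1 (0 + 2 * k) 1 := by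
    funext v
    simp [linMonomial, two_mul]
  rw [show (k + k) / 2 = k by omega, hp, iterate_LQ_linMonomial a b hQ,
    linMonomial_zero_one_add_linMonomial_one_zero]
  simp [two_mul]

end

theorem gradient_iterate_pow_linear_mul_linear_general (d q : ℕ)
    (hqe : Even q) (a₁ a₂ : EuclideanSpace ℝ (Fin d))
    (ha : LinearIndependent ℝ ![a₁, a₂])
    (Q : Matrix (Fin d) (Fin d) ℝ) (hQ : Q.PosDef) :
    (∀ u, gradient ((LQ Q)^[q / 2] fun v => (⟪a₁, v⟫) ^ q * ⟪a₂, v⟫) u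
        = ((q : ℝ) * (Nat.factorial q : ℝ)
              * ((fun k => a₁ k) ⬝ᵥ Q.mulVec (fun k => a₁ k)) ^ (q / 2 - 1)
              * ((fun k => a₁ k) ⬝ᵥ Q.mulVec (fun k => a₂ k))) • a₁
          + ((Nat.factorial q : ℝ)
              * ((fun k => a₁ k) ⬝ᵥ Q.mulVec (fun k => a₁ k)) ^ (q / 2)) • a₂) ∧
    ∀ u, gradient ((LQ Q)^[q / 2] fun v => (⟪a₁, v⟫) ^ q * ⟪a₂, v⟫) u ≠ 0 := by
  have hs : 0 < a₁.ofLp ⬝ᵥ Q *ᵥ a₁.ofLp := by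
    simpa using hQ.dotProduct_mulVec_pos (x := a₁.ofLp) (by simpa using ha.ne_zero 0)
  have hc : (q ! : ℝ) * (a₁.ofLp ⬝ᵥ Q *ᵥ a₁.ofLp) ^ (q / 2) ≠ 0 := by positivity
  rw [iterate_LQ_pow_mul_of_even a₁ a₂ (Matrix.isHermitian_iff_isSymm.mp hQ.isHermitian) hqe]
  refine ⟨fun u => gradient_inner_right _ u, fun u h0 => hc ?_⟩
  rw [gradient_inner_right] at h0
  exact (LinearIndependent.pair_iff.mp ha _ _ h0).2

/-- For `p(u) = (a₁ᵀu)^q (a₂ᵀu)` with `a₁, a₂` linearly independent and `Q` positive definite,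
`∇(∇ᵀQ∇)^{q/2} p = q·q!·(a₁ᵀQa₁)^{q/2−1}(a₁ᵀQa₂)·a₁ + q!·(a₁ᵀQa₁)^{q/2}·a₂` everywhere,
and this vector is nonzero. -/
theorem gradient_iterate_pow_linear_mul_linear (d q : ℕ) (hd : 2 ≤ d) (hq : 2 ≤ q)
    (hqe : Even q) (a₁ a₂ : EuclideanSpace ℝ (Fin d))
    (ha : LinearIndependent ℝ ![a₁, a₂])
    (Q : Matrix (Fin d) (Fin d) ℝ) (hQ : Q.PosDef) :
    (∀ u, gradient ((LQ Q)^[q / 2] fun v => (⟪a₁, v⟫) ^ q * ⟪a₂, v⟫) u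
        = ((q : ℝ) * (Nat.factorial q : ℝ)
              * ((fun k => a₁ k) ⬝ᵥ Q.mulVec (fun k => a₁ k)) ^ (q / 2 - 1)
              * ((fun k => a₁ k) ⬝ᵥ Q.mulVec (fun k => a₂ k))) • a₁
          + ((Nat.factorial q : ℝ)
              * ((fun k => a₁ k) ⬝ᵥ Q.mulVec (fun k => a₁ k)) ^ (q / 2)) • a₂) ∧
    ∀ u, gradient ((LQ Q)^[q / 2] fun v => (⟪a₁, v⟫) ^ q * ⟪a₂, v⟫) u ≠ 0 :=
  gradient_iterate_pow_linear_mul_linear_general d q hqe a₁ a₂ ha Q hQ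
end

section
/- Let k ≥ 1 and let S₁, …, S_k be Lebesgue-measurable subsets of [0,∞), each of positive Lebesgue measure, which are essentially ordered: for every i < j, x < y holds for almost every x ∈ S_i and almost every y ∈ S_j. Let w be a measurable function on [0,∞) such that on each S_j either w ≥ 0 almost everywhere or w ≤ 0 almost everywhere, with ∫_{S_j} w(x) dx ≠ 0, and with ∫_{S_j} |w(x)| x^{2(k−1)} dx < ∞ for each j. Then the k×k matrix M with entries M_{ij} = ∫_{S_j} w(x) x^{2(i−1)} dx (for i, j = 1, …, k) is nonsingular. -/
/-!
If the moment matrix were singular, some `c ≠ 0` would give `∫_{S_j} w p = 0` for every `j`,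
where `p x = ∑ c_i x^(2i)`. As `w` has constant sign and nonzero integral on `S_j` while `p` has
only finitely many zeros, `p` takes both signs on `S_j`, hence vanishes at some `r_j` strictly
inside the essential span of `S_j`. The essential ordering of the sets gives
`0 ≤ r_1 < ⋯ < r_k`, so the polynomial `∑ c_i y^i` of degree `< k` vanishes at the `k` distinct
points `r_j²`, forcing `c = 0` (Vandermonde).
-/

open MeasureTheory Set Filter Polynomial

theorem finite_setOf_sum_mul_pow_mul_eq_zero {R : Type*} [CommRing R] [IsDomain R] {k d : ℕ}
    (hd : d ≠ 0) {c : Fin k → R} (hc : c ≠ 0) :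
    {x : R | ∑ i, c i * x ^ (d * i) = 0}.Finite := by
  set P : R[X] := ∑ i, C (c i) * X ^ (d * (i : ℕ))
  have hP : P ≠ 0 := by
    obtain ⟨i, hi⟩ := Function.ne_iff.mp hc
    intro h
    apply hi
    simpa [P, finsetSum_coeff, coeff_C_mul_X_pow, hd, Fin.val_inj] using
      congrArg (coeff · (d * i)) h
  refine (finite_setOfPred_isRoot hP).subset fun x hx => ?_
  simpa [P, eval_finsetSum] using hx

theorem ae_eq_zero_of_integral_eq_zero {α : Type*} [MeasurableSpace α] {μ : Measure α} {f : α → ℝ}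
    (hsign : (∀ᵐ x ∂μ, 0 ≤ f x) ∨ ∀ᵐ x ∂μ, f x ≤ 0) (hf : Integrable f μ) (h0 : ∫ x, f x ∂μ = 0) :
    f =ᵐ[μ] 0 := by
  rcases hsign with hsign | hsign
  · exact (integral_eq_zero_iff_of_nonneg_ae hsign hf).1 h0
  · have hneg := (integral_eq_zero_iff_of_nonneg_ae (f := -f)
      (hsign.mono fun x hx => by simpa using hx) hf.neg).1 (by simp [integral_neg, h0])
    simpa using hneg.neg

theorem frequently_pos_of_integral_mul_eq_zero {α : Type*} [MeasurableSpace α] {μ : Measure α}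
    {w f : α → ℝ} (hw : (∀ᵐ x ∂μ, 0 ≤ w x) ∨ ∀ᵐ x ∂μ, w x ≤ 0) (hw0 : ∫ x, w x ∂μ ≠ 0)
    (hf : ∀ᵐ x ∂μ, f x ≠ 0) (hwf : Integrable (fun x => w x * f x) μ)
    (h0 : ∫ x, w x * f x ∂μ = 0) : ∃ᵐ x ∂μ, 0 < f x := by
  by_contra hpos
  have hf_nonpos : ∀ᵐ x ∂μ, f x ≤ 0 := by simpa using hpos
  have hwf_sign : (∀ᵐ x ∂μ, 0 ≤ w x * f x) ∨ ∀ᵐ x ∂μ, w x * f x ≤ 0 := by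
    rcases hw with hw | hw
    · exact .inr <| (hw.and hf_nonpos).mono fun x hx => mul_nonpos_of_nonneg_of_nonpos hx.1 hx.2
    · exact .inl <| (hw.and hf_nonpos).mono fun x hx => mul_nonneg_of_nonpos_of_nonpos hx.1 hx.2
  have hw_zero : w =ᵐ[μ] 0 := by
    filter_upwards [ae_eq_zero_of_integral_eq_zero hwf_sign hwf h0, hf] with x hx hfx
    exact (mul_eq_zero.1 hx).resolve_right hfx
  exact hw0 (by simp [integral_congr_ae hw_zero])

theorem frequently_neg_of_integral_mul_eq_zero {α : Type*} [MeasurableSpace α] {μ : Measure α}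
    {w f : α → ℝ} (hw : (∀ᵐ x ∂μ, 0 ≤ w x) ∨ ∀ᵐ x ∂μ, w x ≤ 0) (hw0 : ∫ x, w x ∂μ ≠ 0)
    (hf : ∀ᵐ x ∂μ, f x ≠ 0) (hwf : Integrable (fun x => w x * f x) μ)
    (h0 : ∫ x, w x * f x ∂μ = 0) : ∃ᵐ x ∂μ, f x < 0 := by
  simpa using frequently_pos_of_integral_mul_eq_zero (f := -f) hw hw0 (by simpa using hf)
    (by simpa using hwf.neg) (by simp [integral_neg, h0])

theorem exists_zero_mem_Ioo_of_frequently {μ : Measure ℝ} {f : ℝ → ℝ} (hf : Continuous f)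
    {s : Set ℝ} (hs : ∀ᵐ x ∂μ, x ∈ s) (hpos : ∃ᵐ x ∂μ, 0 < f x) (hneg : ∃ᵐ x ∂μ, f x < 0) :
    ∃ a ∈ s, ∃ b ∈ s, ∃ r ∈ Ioo a b, f r = 0 := by
  obtain ⟨a, hfa, ha⟩ := (hpos.and_eventually hs).exists
  obtain ⟨b, hfb, hb⟩ := (hneg.and_eventually hs).exists
  rcases le_total a b with hab | hba
  · obtain ⟨r, hr, hfr⟩ := intermediate_value_Ioo' hab hf.continuousOn ⟨hfb, hfa⟩
    exact ⟨a, ha, b, hb, r, hr, hfr⟩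
  · obtain ⟨r, hr, hfr⟩ := intermediate_value_Ioo hba hf.continuousOn ⟨hfb, hfa⟩
    exact ⟨b, hb, a, ha, r, hr, hfr⟩

theorem exists_le_ae_and_ae_le_of_ae_lt {μ ν : Measure ℝ} (hμ : μ ≠ 0) (hν : ν ≠ 0)
    (h : ∀ᵐ x ∂μ, ∀ᵐ y ∂ν, x < y) : ∃ t, (∀ᵐ x ∂μ, x ≤ t) ∧ ∀ᵐ y ∂ν, t ≤ y := by
  have := ae_neBot.2 hμ
  have := ae_neBot.2 hν
  set L := {x : ℝ | ∀ᵐ y ∂ν, x < y}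
  have hL : L.Nonempty := h.exists
  have hL_bdd : BddAbove L := by
    by_contra hL_unbdd
    have : ∀ᵐ y ∂ν, ∀ n : ℕ, (n : ℝ) < y := ae_all_iff.2 fun n => by
      obtain ⟨x, hx, hnx⟩ := not_bddAbove_iff.1 hL_unbdd n
      exact (show ∀ᵐ y ∂ν, x < y from hx).mono fun y hy => hnx.trans hy
    obtain ⟨y, hy⟩ := this.exists
    obtain ⟨n, hn⟩ := exists_nat_gt y
    exact (hy n).not_gt hn
  obtain ⟨u, -, hu, huL⟩ := exists_seq_tendsto_sSup hL hL_bdd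
  refine ⟨sSup L, h.mono fun x hx => le_csSup hL_bdd hx, ?_⟩
  filter_upwards [ae_all_iff.2 huL] with y hy
  exact le_of_tendsto' hu fun n => (hy n).le

theorem exists_ordered_ae_mem_of_ae_lt {ι : Type*} [LinearOrder ι] [Countable ι]
    {μ : ι → Measure ℝ} (hμ : ∀ i, μ i ≠ 0) (h : ∀ i j, i < j → ∀ᵐ x ∂μ i, ∀ᵐ y ∂μ j, x < y) :
    ∃ s : ι → Set ℝ, (∀ i, ∀ᵐ x ∂μ i, x ∈ s i) ∧ ∀ i j, i < j → ∀ x ∈ s i, ∀ y ∈ s j, x ≤ y := by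
  have : ∀ i j, ∃ t, i < j → (∀ᵐ x ∂μ i, x ≤ t) ∧ ∀ᵐ y ∂μ j, t ≤ y := fun i j => by
    by_cases hij : i < j
    · obtain ⟨t, ht⟩ := exists_le_ae_and_ae_le_of_ae_lt (hμ i) (hμ j) (h i j hij)
      exact ⟨t, fun _ => ht⟩
    · exact ⟨0, fun h => absurd h hij⟩
  choose t ht using this
  refine ⟨fun j => {x | (∀ i, i < j → t i j ≤ x) ∧ ∀ l, j < l → x ≤ t j l}, fun j => ?_,
    fun i j hij x hx y hy => (hx.2 j hij).trans (hy.1 i hij)⟩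
  refine (ae_all_iff.2 fun i => ?_).and (ae_all_iff.2 fun l => ?_)
  · by_cases hij : i < j
    · exact (ht i j hij).2.mono fun _ hx _ => hx
    · exact Eventually.of_forall fun _ hi => absurd hi hij
  · by_cases hjl : j < l
    · exact (ht j l hjl).1.mono fun _ hx _ => hx
    · exact Eventually.of_forall fun _ hl => absurd hl hjl

section EvenMoments

variable {μ : Measure ℝ} {w : ℝ → ℝ} {n : ℕ}

theorem pow_two_mul_le_one_add {m : ℕ} (hmn : m ≤ n) (x : ℝ) :
    x ^ (2 * m) ≤ 1 + x ^ (2 * n) := by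
  rw [pow_mul, pow_mul]
  rcases le_total (x ^ 2) 1 with hx | hx
  · linarith [pow_le_one₀ (sq_nonneg x) hx (n := m), pow_nonneg (sq_nonneg x) n]
  · linarith [pow_le_pow_right₀ hx hmn]

theorem MeasureTheory.Integrable.mul_pow_two_mul_of_le (hw : Integrable w μ)
    (hn : Integrable (fun x => |w x| * x ^ (2 * n)) μ) {m : ℕ} (hmn : m ≤ n) :
    Integrable (fun x => w x * x ^ (2 * m)) μ := by
  refine (hw.abs.add hn).mono'
    (hw.aestronglyMeasurable.mul (continuous_pow _).aestronglyMeasurable) (ae_of_all _ fun x => ?_)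
  have hx : 0 ≤ x ^ (2 * m) := by rw [pow_mul]; positivity
  calc ‖w x * x ^ (2 * m)‖ = |w x| * x ^ (2 * m) := by rw [norm_mul, Real.norm_of_nonneg hx]; rfl
    _ ≤ |w x| * (1 + x ^ (2 * n)) := by gcongr; exact pow_two_mul_le_one_add hmn x
    _ = |w x| + |w x| * x ^ (2 * n) := by ring

variable {k : ℕ} (c : Fin k → ℝ)

theorem MeasureTheory.Integrable.mul_sum_pow_two_mul (hw : Integrable w μ)
    (hk : Integrable (fun x => |w x| * x ^ (2 * (k - 1))) μ) :
    Integrable (fun x => w x * ∑ i, c i * x ^ (2 * (i : ℕ))) μ := by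
  simp_rw [Finset.mul_sum, mul_left_comm (w _)]
  exact integrable_finsetSum _ fun i _ =>
    (hw.mul_pow_two_mul_of_le hk (by omega)).const_mul (c i)

theorem integral_mul_sum_pow_two_mul (hw : Integrable w μ)
    (hk : Integrable (fun x => |w x| * x ^ (2 * (k - 1))) μ) :
    ∫ x, w x * ∑ i, c i * x ^ (2 * (i : ℕ)) ∂μ = ∑ i, c i * ∫ x, w x * x ^ (2 * (i : ℕ)) ∂μ := by
  simp_rw [Finset.mul_sum, mul_left_comm (w _)]
  rw [integral_finsetSum _ fun i _ => (hw.mul_pow_two_mul_of_le hk (by omega)).const_mul (c i)]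
  simp_rw [integral_const_mul]

end EvenMoments

theorem moment_matrix_nonsingular_general (k : ℕ) (S : Fin k → Set ℝ)
    (hSmeas : ∀ j, MeasurableSet (S j)) (hSsub : ∀ j, S j ⊆ Ici (0 : ℝ))
    (hSpos : ∀ j, 0 < volume (S j))
    (horder : ∀ i j : Fin k, i < j →
      ∀ᵐ x ∂(volume.restrict (S i)), ∀ᵐ y ∂(volume.restrict (S j)), x < y)
    (w : ℝ → ℝ)
    (hsign : ∀ j, (∀ᵐ x ∂(volume.restrict (S j)), 0 ≤ w x) ∨
      (∀ᵐ x ∂(volume.restrict (S j)), w x ≤ 0))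
    (hnz : ∀ j, (∫ x in S j, w x) ≠ 0)
    (hint : ∀ j, IntegrableOn (fun x => |w x| * x ^ (2 * (k - 1))) (S j)) :
    (Matrix.of fun i j : Fin k => ∫ x in S j, w x * x ^ (2 * (i : ℕ))).det ≠ 0 := by
  intro hdet
  obtain ⟨c, hc0, hc⟩ := Matrix.exists_vecMul_eq_zero_iff.mpr hdet
  set p : ℝ → ℝ := fun x => ∑ i, c i * x ^ (2 * (i : ℕ))
  have hp_ne : ∀ᵐ x, p x ≠ 0 := measure_eq_zero_iff_ae_notMem.1
    ((finite_setOf_sum_mul_pow_mul_eq_zero two_ne_zero hc0).measure_zero _)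
  have hw_int : ∀ j, IntegrableOn w (S j) := fun j => .of_integral_ne_zero (hnz j)
  have hwp_int : ∀ j, IntegrableOn (fun x => w x * p x) (S j) := fun j =>
    (hw_int j).mul_sum_pow_two_mul c (hint j)
  have hwp_zero : ∀ j, ∫ x in S j, w x * p x = 0 := fun j => by
    rw [integral_mul_sum_pow_two_mul c (hw_int j) (hint j)]
    simpa [Matrix.vecMul, dotProduct] using congrFun hc j
  obtain ⟨s, hs, hs_ordered⟩ := exists_ordered_ae_mem_of_ae_lt
    (fun j => Measure.restrict_eq_zero.not.2 (hSpos j).ne') horder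
  have hroot : ∀ j, ∃ a ∈ s j ∩ S j, ∃ b ∈ s j ∩ S j, ∃ r ∈ Ioo a b, p r = 0 := fun j =>
    exists_zero_mem_Ioo_of_frequently (by fun_prop) ((hs j).and (ae_restrict_mem (hSmeas j)))
      (frequently_pos_of_integral_mul_eq_zero (hsign j) (hnz j) (ae_restrict_of_ae hp_ne)
        (hwp_int j) (hwp_zero j))
      (frequently_neg_of_integral_mul_eq_zero (hsign j) (hnz j) (ae_restrict_of_ae hp_ne)
        (hwp_int j) (hwp_zero j))
  choose a ha b hb r hr hpr using hroot
  have hr_mono : StrictMono r := fun i j hij =>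
    (hr i).2.trans ((hs_ordered i j hij _ (hb i).1 _ (ha j).1).trans_lt (hr j).1)
  have hr_nonneg : ∀ j, 0 ≤ r j := fun j => (hSsub j (ha j).2).trans (hr j).1.le
  refine hc0 (Matrix.eq_zero_of_forall_index_sum_mul_pow_eq_zero (f := fun j => r j ^ 2)
    (fun i j hij => ?_) fun j => by simpa [p, pow_mul] using hpr j)
  exact hr_mono.injective ((pow_left_inj₀ (hr_nonneg i) (hr_nonneg j) two_ne_zero).1 hij)

/-- Essentially ordered sets, a sign-constant weight with nonzero integrals on each set:
the moment matrix `M_{ij} = ∫_{S_j} w(x) x^{2(i−1)} dx` is nonsingular. -/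
theorem moment_matrix_nonsingular (k : ℕ) (hk : 1 ≤ k) (S : Fin k → Set ℝ)
    (hSmeas : ∀ j, MeasurableSet (S j)) (hSsub : ∀ j, S j ⊆ Ici (0 : ℝ))
    (hSpos : ∀ j, 0 < volume (S j))
    (horder : ∀ i j : Fin k, i < j →
      ∀ᵐ x ∂(volume.restrict (S i)), ∀ᵐ y ∂(volume.restrict (S j)), x < y)
    (w : ℝ → ℝ) (hw : Measurable w)
    (hsign : ∀ j, (∀ᵐ x ∂(volume.restrict (S j)), 0 ≤ w x) ∨
      (∀ᵐ x ∂(volume.restrict (S j)), w x ≤ 0))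
    (hnz : ∀ j, (∫ x in S j, w x) ≠ 0)
    (hint : ∀ j, IntegrableOn (fun x => |w x| * x ^ (2 * (k - 1))) (S j)) :
    (Matrix.of fun i j : Fin k => ∫ x in S j, w x * x ^ (2 * (i : ℕ))).det ≠ 0 :=
  moment_matrix_nonsingular_general k S hSmeas hSsub hSpos horder w hsign hnz hint
end

section
/- Let d ≥ 1 be an integer and q ≥ 2 an even integer, and let g : [0,∞) → ℝ be measurable with ∫₀^∞ x^{d−1+i}|g(x)| dx < ∞ for all 0 ≤ i ≤ q+1. Suppose that either (a) B_{d,0}(g) = 1/b_d, B_{d,i}(g) = 0 for every even i with 2 ≤ i ≤ q−2, and B_{d,q}(g) ≠ 0, or (b) B_{d,1}(g) = −d/b_d, B_{d,i}(g) = 0 for every odd i with 3 ≤ i ≤ q−1, and B_{d,q+1}(g) ≠ 0. If g changes its sign exactly k times on [0,∞), then k ≥ q/2 − 1; that is, g changes its sign at least q/2 − 1 times on [0,∞). -/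
open MeasureTheory Set Filter Topology

/-!
Suppose `g` changed sign only `k ≤ q/2 - 2` times, at `0 < r₁ < ⋯ < r_k`. Then `∏ (x - r_m) g(x)`,
and hence `x^c ∏ (x² - r_m²) g(x)`, has constant sign on `(0, ∞)`. The latter is `x^c P(x²) g(x)`
with `deg P = k`, so for `c = 2` in case (a) and `c = 3` in case (b) its integral against `x^{d-1}`
is a combination of the vanishing moments `B_{d,c+2i}(g)`, `i ≤ k`. Hence it vanishes a.e., so
`g = 0` a.e. on `(0, ∞)`, contradicting `B_{d,0}(g) = 1/b_d` resp. `B_{d,1}(g) = -d/b_d`.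
-/

open Polynomial
open scoped Finset

theorem Fin.exists_castSucc_le_and_le_succ {α : Type*} [LinearOrder α] :
    ∀ {n : ℕ} (t : Fin (n + 2) → α) {x : α}, t 0 ≤ x → x ≤ t (Fin.last (n + 1)) →
      ∃ j : Fin (n + 1), t j.castSucc ≤ x ∧ x ≤ t j.succ
  | 0, _, _, h0, hlast => ⟨0, h0, hlast⟩
  | n + 1, t, x, h0, hlast => by
    by_cases hx : x ≤ t 1
    · exact ⟨0, h0, hx⟩
    · obtain ⟨j, hj⟩ := Fin.exists_castSucc_le_and_le_succ (fun i => t i.succ)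
        (le_of_not_ge hx) hlast
      exact ⟨j.succ, hj⟩

theorem Fin.eq_mul_neg_one_pow_of_succ_eq_neg {R : Type*} [Ring R] {n : ℕ} {s : Fin (n + 1) → R}
    (hs : ∀ j : Fin n, s j.succ = -s j.castSucc) (j : Fin (n + 1)) :
    s j = s 0 * (-1) ^ (j : ℕ) := by
  induction j using Fin.induction with
  | zero => simp
  | succ j ih => rw [hs, ih, Fin.val_castSucc, Fin.val_succ, pow_succ, mul_neg_one, mul_neg]

theorem Finset.neg_one_pow_card_filter_not_mul_prod_nonneg {ι R : Type*} [CommRing R]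
    [PartialOrder R] [IsOrderedRing R] (s : Finset ι) (p : ι → Prop) [DecidablePred p]
    {f : ι → R} (hp : ∀ i ∈ s, p i → 0 ≤ f i) (hnp : ∀ i ∈ s, ¬p i → f i ≤ 0) :
    0 ≤ (-1) ^ #{i ∈ s | ¬p i} * ∏ i ∈ s, f i := by
  rw [← Finset.prod_filter_mul_prod_filter_not s p, mul_left_comm, ← Finset.prod_neg]
  refine mul_nonneg (Finset.prod_nonneg fun i hi => ?_) (Finset.prod_nonneg fun i hi => ?_)
  · rw [Finset.mem_filter] at hi
    exact hp i hi.1 hi.2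
  · rw [Finset.mem_filter] at hi
    exact neg_nonneg.mpr (hnp i hi.1 hi.2)

theorem ChangesSign.exists_nonneg_mul_prod_sub_mul {g : ℝ → ℝ} {k : ℕ} (hg : ChangesSign g k) :
    ∃ (ε : ℝ) (r : Fin k → ℝ), ε ≠ 0 ∧ (∀ m, 0 < r m) ∧
      ∀ x, 0 < x → 0 ≤ ε * ((∏ m, (x - r m)) * g x) := by
  obtain ⟨t, s, hmono, ht0, htop, hs, halt, hsign⟩ := hg
  have hnode : ∀ m : Fin k, ∃ r : ℝ, 0 < r ∧ t m.succ.castSucc = r := by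
    intro m
    have hpos : 0 < t m.succ.castSucc := ht0 ▸ hmono (Fin.castSucc_pos (Fin.succ_pos m))
    have hfin : t m.succ.castSucc < ⊤ := htop ▸ hmono (Fin.castSucc_lt_last _)
    refine ⟨(t m.succ.castSucc).toReal, ?_, (EReal.coe_toReal hfin.ne hpos.ne_bot).symm⟩
    exact EReal.toReal_pos hpos hfin.ne
  choose r hr_pos hr using hnode
  refine ⟨s 0 * (-1) ^ k, r, ?_, hr_pos, fun x hx => ?_⟩
  · rcases hs 0 with h | h <;> simp [h]
  obtain ⟨j, hxj, hjx⟩ := Fin.exists_castSucc_le_and_le_succ t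
    (x := (x : EReal)) (by rw [ht0]; exact_mod_cast hx.le) (by rw [htop]; exact le_top)
  have hleft : ∀ m : Fin k, (m : ℕ) < j → 0 ≤ x - r m := by
    intro m hm
    have : t m.succ.castSucc ≤ t j.castSucc := hmono.monotone (by simpa [Fin.le_def] using hm)
    exact sub_nonneg.mpr (EReal.coe_le_coe_iff.mp (hr m ▸ this.trans hxj))
  have hright : ∀ m : Fin k, ¬(m : ℕ) < j → x - r m ≤ 0 := by
    intro m hm
    have : t j.succ ≤ t m.succ.castSucc := hmono.monotone (by simp [Fin.le_def]; omega)
    exact sub_nonpos.mpr (EReal.coe_le_coe_iff.mp (hr m ▸ hjx.trans this))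
  have hprod := Finset.neg_one_pow_card_filter_not_mul_prod_nonneg Finset.univ
    (fun m : Fin k => (m : ℕ) < j) (fun m _ => hleft m) (fun m _ => hright m)
  have hcard : (j : ℕ) + #{m : Fin k | ¬(m : ℕ) < j} = k := by
    have := Finset.card_filter_add_card_filter_not (s := Finset.univ) (fun m : Fin k => (m : ℕ) < j)
    rw [Fin.card_filter_val_lt, Finset.card_univ, Fintype.card_fin,
      min_eq_right (Nat.lt_succ_iff.mp j.isLt)] at this
    exact this
  -- on the `j`-th interval exactly the factors `x - r m` with `j ≤ m` are nonpositive
  calc 0 ≤ (s j * g x) * ((-1) ^ #{m : Fin k | ¬(m : ℕ) < j} * ∏ m, (x - r m)) :=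
        mul_nonneg ((hsign j).1 x hxj hjx) hprod
    _ = s 0 * (-1) ^ k * ((∏ m, (x - r m)) * g x) := by
        have hpow : (-1 : ℝ) ^ k = (-1) ^ (j : ℕ) * (-1) ^ #{m : Fin k | ¬(m : ℕ) < j} := by
          rw [← pow_add, hcard]
        rw [Fin.eq_mul_neg_one_pow_of_succ_eq_neg halt j, hpow]
        ring

theorem Polynomial.eval_mul_eq_sum_range {R : Type*} [CommSemiring R] {p : R[X]} {n : ℕ}
    (hp : p.natDegree ≤ n) (y z : R) :
    p.eval y * z = ∑ i ∈ Finset.range (n + 1), p.coeff i * (y ^ i * z) := by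
  rw [eval_eq_sum_range' (Nat.lt_succ_of_le hp), Finset.sum_mul]
  simp only [mul_assoc]

section PolynomialMoments

variable {α : Type*} [MeasurableSpace α] {μ : Measure α} {φ f : α → ℝ} {n : ℕ} {p : ℝ[X]}

theorem integrable_polynomial_eval_mul
    (hint : ∀ i ≤ n, Integrable (fun x => φ x ^ i * f x) μ) (hp : p.natDegree ≤ n) :
    Integrable (fun x => p.eval (φ x) * f x) μ := by
  simp_rw [Polynomial.eval_mul_eq_sum_range hp]
  exact integrable_finsetSum _ fun i hi =>
    (hint i (Nat.lt_succ_iff.mp (Finset.mem_range.mp hi))).const_mul _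

theorem integral_polynomial_eval_mul_eq_zero
    (hint : ∀ i ≤ n, Integrable (fun x => φ x ^ i * f x) μ)
    (hzero : ∀ i ≤ n, ∫ x, φ x ^ i * f x ∂μ = 0) (hp : p.natDegree ≤ n) :
    ∫ x, p.eval (φ x) * f x ∂μ = 0 := by
  simp_rw [Polynomial.eval_mul_eq_sum_range hp]
  rw [integral_finsetSum _ fun i hi =>
    (hint i (Nat.lt_succ_iff.mp (Finset.mem_range.mp hi))).const_mul _]
  refine Finset.sum_eq_zero fun i hi => ?_
  rw [integral_const_mul, hzero i (Nat.lt_succ_iff.mp (Finset.mem_range.mp hi)), mul_zero]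

end PolynomialMoments

theorem ae_eq_zero_of_changesSign_of_bmom_eq_zero {d c k : ℕ} {g : ℝ → ℝ} (hg : ChangesSign g k)
    (hint : ∀ i ≤ k, IntegrableOn (fun x => x ^ (d - 1 + (c + 2 * i)) * g x) (Ioi 0))
    (hzero : ∀ i ≤ k, Bmom d (c + 2 * i) g = 0) :
    ∀ᵐ x ∂volume.restrict (Ioi 0), g x = 0 := by
  obtain ⟨ε, r, hε, hr, hsign⟩ := hg.exists_nonneg_mul_prod_sub_mul
  set p : ℝ[X] := ∏ m, (X - C (r m ^ 2))
  have hdeg : p.natDegree ≤ k := (natDegree_finsetProd_X_sub_C_eq_card _ _).trans (by simp) |>.le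
  have hpow : ∀ i, (fun x : ℝ => x ^ (d - 1 + (c + 2 * i)) * g x) =
      fun x => (x ^ 2) ^ i * (x ^ (d - 1 + c) * g x) := fun i => funext fun x => by ring
  have hmint : ∀ i ≤ k, Integrable (fun x : ℝ => (x ^ 2) ^ i * (x ^ (d - 1 + c) * g x))
      (volume.restrict (Ioi 0)) := fun i hi => hpow i ▸ hint i hi
  have hmzero : ∀ i ≤ k, ∫ x in Ioi 0, (x ^ 2) ^ i * (x ^ (d - 1 + c) * g x) = 0 :=
    fun i hi => hpow i ▸ hzero i hi
  have hfactor : ∀ x : ℝ, p.eval (x ^ 2) * (x ^ (d - 1 + c) * g x) =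
      ((∏ m, (x - r m)) * g x) * (x ^ (d - 1 + c) * ∏ m, (x + r m)) := by
    intro x
    have : p.eval (x ^ 2) = (∏ m, (x - r m)) * ∏ m, (x + r m) := by
      simp only [p, eval_prod, eval_sub, eval_X, eval_C, ← Finset.prod_mul_distrib]
      exact Finset.prod_congr rfl fun m _ => by ring
    rw [this]
    ring
  have hnonneg : 0 ≤ᵐ[volume.restrict (Ioi 0)]
      fun x => ε * (p.eval (x ^ 2) * (x ^ (d - 1 + c) * g x)) := by
    filter_upwards [self_mem_ae_restrict measurableSet_Ioi] with x (hx : 0 < x)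
    rw [hfactor, ← mul_assoc]
    exact mul_nonneg (hsign x hx)
      (mul_nonneg (by positivity) (Finset.prod_nonneg fun m _ => by linarith [hr m]))
  have hvanish := (integral_eq_zero_iff_of_nonneg_ae hnonneg
    ((integrable_polynomial_eval_mul hmint hdeg).const_mul ε)).mp
    (by rw [integral_const_mul, integral_polynomial_eval_mul_eq_zero hmint hmzero hdeg, mul_zero])
  have hoff : ∀ᵐ x ∂volume.restrict (Ioi 0), x ∉ range r :=
    ae_restrict_of_ae (measure_eq_zero_iff_ae_notMem.mp ((Set.finite_range r).measure_zero _))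
  filter_upwards [hvanish, hoff, self_mem_ae_restrict measurableSet_Ioi]
    with x hx hxr (hxpos : 0 < x)
  have hsub : ∏ m, (x - r m) ≠ 0 :=
    Finset.prod_ne_zero_iff.mpr fun m _ => sub_ne_zero.mpr fun h => hxr ⟨m, h.symm⟩
  have hadd : 0 < x ^ (d - 1 + c) * ∏ m, (x + r m) :=
    mul_pos (by positivity) (Finset.prod_pos fun m _ => by linarith [hr m])
  simpa [hfactor, hε, hsub, hadd.ne'] using hx

theorem integrableOn_Ioi_pow_mul_of_abs {g : ℝ → ℝ} {n : ℕ} (hg : Measurable g)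
    (h : IntegrableOn (fun x => x ^ n * |g x|) (Ioi 0)) :
    IntegrableOn (fun x => x ^ n * g x) (Ioi 0) := by
  refine h.mono' (by fun_prop) ?_
  filter_upwards [self_mem_ae_restrict measurableSet_Ioi] with x (hx : 0 < x)
  rw [norm_mul, norm_pow, Real.norm_of_nonneg hx.le, Real.norm_eq_abs]

theorem Bmom_eq_zero_of_ae_eq_zero {g : ℝ → ℝ} (hg : ∀ᵐ x ∂volume.restrict (Ioi 0), g x = 0)
    (d i : ℕ) : Bmom d i g = 0 :=
  integral_eq_zero_of_ae (by filter_upwards [hg] with x hx; simp [hx])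

theorem bconst_pos {d : ℕ} (hd : 1 ≤ d) : 0 < bconst d := by
  have : (0 : ℝ) < d / 2 := by positivity
  exact div_pos (by positivity) (Real.Gamma_pos_of_pos this)

theorem min_sign_changes_general (d q : ℕ) (hd : 1 ≤ d)
    (g : ℝ → ℝ) (hmeas : Measurable g)
    (hint : ∀ i ≤ q + 1, IntegrableOn (fun x => x ^ (d - 1 + i) * |g x|) (Ioi 0))
    (hmom :
      (Bmom d 0 g = (bconst d)⁻¹ ∧
        (∀ i, Even i → 2 ≤ i → i ≤ q - 2 → Bmom d i g = 0) ∧ Bmom d q g ≠ 0) ∨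
      (Bmom d 1 g = -(d : ℝ) / bconst d ∧
        (∀ i, Odd i → 3 ≤ i → i ≤ q - 1 → Bmom d i g = 0) ∧ Bmom d (q + 1) g ≠ 0))
    (k : ℕ) (hk : ChangesSign g k) :
    q / 2 - 1 ≤ k := by
  by_contra! hlt
  have hint' i (hi : i ≤ q + 1) := integrableOn_Ioi_pow_mul_of_abs hmeas (hint i hi)
  have hb := bconst_pos hd
  rcases hmom with ⟨h0, hzero, -⟩ | ⟨h1, hzero, -⟩
  · have hg := ae_eq_zero_of_changesSign_of_bmom_eq_zero (c := 2) hk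
      (fun i _ => hint' _ (by omega)) (fun i _ => hzero _ ⟨1 + i, by ring⟩ (by omega) (by omega))
    rw [Bmom_eq_zero_of_ae_eq_zero hg] at h0
    exact (inv_pos.mpr hb).ne h0
  · have hg := ae_eq_zero_of_changesSign_of_bmom_eq_zero (c := 3) hk
      (fun i _ => hint' _ (by omega)) (fun i _ => hzero _ ⟨1 + i, by ring⟩ (by omega) (by omega))
    rw [Bmom_eq_zero_of_ae_eq_zero hg] at h1
    have : -(d : ℝ) / bconst d < 0 := div_neg_of_neg_of_pos (by simp; omega) hb
    linarith

/-- A kernel whose radial moments satisfy either the even-moment conditions (a) up to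
order `q` or the odd-moment conditions (b) up to order `q+1` must change its sign at least
`q/2 − 1` times on `[0,∞)`. -/
theorem min_sign_changes (d q : ℕ) (hd : 1 ≤ d) (hq : 2 ≤ q) (hqe : Even q)
    (g : ℝ → ℝ) (hmeas : Measurable g)
    (hint : ∀ i ≤ q + 1, IntegrableOn (fun x => x ^ (d - 1 + i) * |g x|) (Ioi 0))
    (hmom :
      (Bmom d 0 g = (bconst d)⁻¹ ∧
        (∀ i, Even i → 2 ≤ i → i ≤ q - 2 → Bmom d i g = 0) ∧ Bmom d q g ≠ 0) ∨
      (Bmom d 1 g = -(d : ℝ) / bconst d ∧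
        (∀ i, Odd i → 3 ≤ i → i ≤ q - 1 → Bmom d i g = 0) ∧ Bmom d (q + 1) g ≠ 0))
    (k : ℕ) (hk : ChangesSign g k) :
    q / 2 - 1 ≤ k :=
  min_sign_changes_general d q hd g hmeas hint hmom k hk
end

section
/- Let n ≥ 1 be an integer, let a₀ ≠ 0 and 0 < a₁ ≤ a₂ ≤ ⋯ ≤ a_n be real numbers, and set P(x) = a₀·∏_{i=1}^n (x² − a_i²). If a₀ > 0, then each of the functions P(x)/x^j for j = 0, 1, …, 2n, P′(x)/x^j for j = 0, 1, …, 2n−2, and P″(x)/x^j for j = 0, 1, …, 2n−4 is strictly monotonically increasing on the interval (a_n, ∞); if a₀ < 0, then each of these functions is strictly monotonically decreasing on (a_n, ∞). -/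
/-!
For `x > a_n` every factor `x² - aᵢ²` is positive, and
`x^m ∏_{k ∈ s} (x² - a_k²) / x^j = x^(m + 2|s| - j) ∏_{k ∈ s} (1 - a_k²/x²)`
is a product of positive nondecreasing factors, one of which increases strictly unless
`j = m + 2|s|` and `s = ∅`. By the product rule `P′` and `P″` are positive combinations of
such terms of degree `2n - 1` and `2n - 2`, so they stay strictly increasing after division
by `x^j` for `j ≤ 2n - 2`, resp. `j ≤ 2n - 4`. Multiplying by `a₀` keeps or reverses the
direction.
-/

open Set Finset

section StrictMonoOn

variable {α β : Type*} [Preorder α] {S : Set α}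

theorem StrictMonoOn.finset_sum [AddCommMonoid β] [PartialOrder β] [IsOrderedCancelAddMonoid β]
    {ι : Type*} {s : Finset ι} {f : ι → α → β} (hs : s.Nonempty)
    (hf : ∀ i ∈ s, StrictMonoOn (f i) S) : StrictMonoOn (fun x => ∑ i ∈ s, f i x) S :=
  fun _ hx _ hy hxy => sum_lt_sum_of_nonempty hs fun i hi => hf i hi hx hy hxy

variable [Ring β] [LinearOrder β] [IsStrictOrderedRing β] {f : α → β} {c : β}

theorem StrictMonoOn.const_mul (hf : StrictMonoOn f S) (hc : 0 < c) :
    StrictMonoOn (fun x => c * f x) S :=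
  fun _ hx _ hy hxy => mul_lt_mul_of_pos_left (hf hx hy hxy) hc

theorem StrictMonoOn.const_mul_of_neg (hf : StrictMonoOn f S) (hc : c < 0) :
    StrictAntiOn (fun x => c * f x) S :=
  fun _ hx _ hy hxy => mul_lt_mul_of_neg_left (hf hx hy hxy) hc

end StrictMonoOn

section PowMulProdSqSubSq

variable {ι : Type*} (a : ι → ℝ)

def powMulProdSqSubSq (s : Finset ι) (m : ℕ) (x : ℝ) : ℝ :=
  x ^ m * ∏ k ∈ s, (x ^ 2 - a k ^ 2)

theorem powMulProdSqSubSq_zero (s : Finset ι) :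
    powMulProdSqSubSq a s 0 = fun x => ∏ k ∈ s, (x ^ 2 - a k ^ 2) := by
  funext x
  simp [powMulProdSqSubSq]

theorem powMulProdSqSubSq_div_pow (s : Finset ι) {m j : ℕ} (hj : j ≤ m + 2 * #s) {x : ℝ}
    (hx : x ≠ 0) :
    powMulProdSqSubSq a s m x / x ^ j
      = x ^ (m + 2 * #s - j) * ∏ k ∈ s, (1 - a k ^ 2 / x ^ 2) := by
  have hfactor : ∀ k ∈ s, x ^ 2 - a k ^ 2 = x ^ 2 * (1 - a k ^ 2 / x ^ 2) := fun k _ => by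
    field_simp
  rw [powMulProdSqSubSq, prod_congr rfl hfactor, prod_mul_distrib, prod_const, ← pow_mul,
    ← mul_assoc, ← pow_add, pow_sub₀ x hx hj, div_eq_mul_inv, mul_right_comm]

theorem strictMonoOn_powMulProdSqSubSq_div_pow {s : Finset ι} {m j : ℕ} {c : ℝ} (hc : 0 ≤ c)
    (hpos : ∀ k ∈ s, 0 < a k) (hle : ∀ k ∈ s, a k ≤ c) (hj : j ≤ m + 2 * #s)
    (hstrict : j < m + 2 * #s ∨ s.Nonempty) :
    StrictMonoOn (fun x => powMulProdSqSubSq a s m x / x ^ j) (Ioi c) := by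
  intro x hx y hy hxy
  have hx0 : 0 < x := hc.trans_lt hx
  have hy0 : 0 < y := hx0.trans hxy
  dsimp only
  rw [powMulProdSqSubSq_div_pow a s hj hx0.ne', powMulProdSqSubSq_div_pow a s hj hy0.ne']
  have hfactor_pos : ∀ k ∈ s, 0 < 1 - a k ^ 2 / x ^ 2 := fun k hk => by
    have hakx : a k < x := (hle k hk).trans_lt hx
    rw [sub_pos, div_lt_one (by positivity)]
    nlinarith [hpos k hk]
  have hfactor_lt : ∀ k ∈ s, 1 - a k ^ 2 / x ^ 2 < 1 - a k ^ 2 / y ^ 2 := fun k hk => by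
    have := hpos k hk
    gcongr
  have hprod_pos := prod_pos hfactor_pos
  have hprod_le := prod_le_prod (fun k hk => (hfactor_pos k hk).le) fun k hk => (hfactor_lt k hk).le
  rcases hstrict with hdeg | hs
  · exact mul_lt_mul (pow_lt_pow_left₀ hxy hx0.le (by omega)) hprod_le hprod_pos (by positivity)
  · exact mul_lt_mul' (pow_le_pow_left₀ hx0.le hxy.le _)
      (prod_lt_prod_of_nonempty hfactor_pos hfactor_lt hs) hprod_pos.le (by positivity)

theorem hasDerivAt_powMulProdSqSubSq [DecidableEq ι] (s : Finset ι) (m : ℕ) (x : ℝ) :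
    HasDerivAt (powMulProdSqSubSq a s m)
      (m * powMulProdSqSubSq a s (m - 1) x
        + 2 * ∑ l ∈ s, powMulProdSqSubSq a (s.erase l) (m + 1) x) x := by
  have hfactor : ∀ k ∈ s, HasDerivAt (fun x => x ^ 2 - a k ^ 2) (2 * x) x := fun k _ => by
    simpa using (hasDerivAt_pow 2 x).sub_const (a k ^ 2)
  refine ((hasDerivAt_pow m x).fun_mul (HasDerivAt.fun_finsetProd hfactor)).congr_deriv ?_
  simp only [powMulProdSqSubSq, smul_eq_mul, mul_sum]
  congr 1
  · ring
  · exact sum_congr rfl fun l _ => by ring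

end PowMulProdSqSubSq

section ProdSqSubSq

variable {ι : Type*} [Fintype ι] {a : ι → ℝ} {c : ℝ}

theorem strictMonoOn_prod_sq_sub_sq_div_pow [Nonempty ι] (hpos : ∀ i, 0 < a i)
    (hle : ∀ i, a i ≤ c) {j : ℕ} (hj : j ≤ 2 * Fintype.card ι) :
    StrictMonoOn (fun x => (∏ i, (x ^ 2 - a i ^ 2)) / x ^ j) (Ioi c) := by
  have hc : 0 ≤ c := (hpos (Classical.arbitrary ι)).le.trans (hle _)
  simpa [powMulProdSqSubSq_zero] using
    strictMonoOn_powMulProdSqSubSq_div_pow a (s := univ) (m := 0) hc (fun i _ => hpos i)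
      (fun i _ => hle i) (by simpa using hj) (Or.inr univ_nonempty)

theorem deriv_prod_sq_sub_sq [DecidableEq ι] :
    deriv (fun x => ∏ i, (x ^ 2 - a i ^ 2))
      = fun x => 2 * ∑ i, powMulProdSqSubSq a (univ.erase i) 1 x := by
  funext x
  simpa [powMulProdSqSubSq_zero] using (hasDerivAt_powMulProdSqSubSq a univ 0 x).deriv

theorem deriv_deriv_prod_sq_sub_sq [DecidableEq ι] :
    deriv (deriv fun x => ∏ i, (x ^ 2 - a i ^ 2))
      = fun x => 2 * ∑ i, (powMulProdSqSubSq a (univ.erase i) 0 x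
          + 2 * ∑ l ∈ univ.erase i, powMulProdSqSubSq a ((univ.erase i).erase l) 2 x) := by
  funext x
  rw [deriv_prod_sq_sub_sq]
  refine (HasDerivAt.fun_sum fun i _ => ?_).const_mul 2 |>.deriv
  simpa using hasDerivAt_powMulProdSqSubSq a (univ.erase i) 1 x

theorem strictMonoOn_deriv_prod_sq_sub_sq_div_pow (hpos : ∀ i, 0 < a i) (hle : ∀ i, a i ≤ c)
    {j : ℕ} (hj : j + 2 ≤ 2 * Fintype.card ι) :
    StrictMonoOn (fun x => deriv (fun x => ∏ i, (x ^ 2 - a i ^ 2)) x / x ^ j) (Ioi c) := by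
  classical
  have : Nonempty ι := Fintype.card_pos_iff.mp (by omega)
  have hc : 0 ≤ c := (hpos (Classical.arbitrary ι)).le.trans (hle _)
  simp only [deriv_prod_sq_sub_sq, mul_div_assoc, sum_div]
  refine (StrictMonoOn.finset_sum univ_nonempty fun i _ => ?_).const_mul two_pos
  have hcard : #(univ.erase i) = Fintype.card ι - 1 := by simp
  exact strictMonoOn_powMulProdSqSubSq_div_pow a hc (fun k _ => hpos k) (fun k _ => hle k)
    (by omega) (Or.inl (by omega))

theorem strictMonoOn_deriv_deriv_prod_sq_sub_sq_div_pow (hpos : ∀ i, 0 < a i)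
    (hle : ∀ i, a i ≤ c) {j : ℕ} (hj : j + 4 ≤ 2 * Fintype.card ι) :
    StrictMonoOn (fun x => deriv (deriv fun x => ∏ i, (x ^ 2 - a i ^ 2)) x / x ^ j) (Ioi c) := by
  classical
  have : Nonempty ι := Fintype.card_pos_iff.mp (by omega)
  have hc : 0 ≤ c := (hpos (Classical.arbitrary ι)).le.trans (hle _)
  simp only [deriv_deriv_prod_sq_sub_sq, mul_div_assoc, sum_div, add_div]
  refine (StrictMonoOn.finset_sum univ_nonempty fun i _ => ?_).const_mul two_pos
  have hcard : #(univ.erase i) = Fintype.card ι - 1 := by simp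
  refine StrictMonoOn.add ?_ ((StrictMonoOn.finset_sum ?_ fun l hl => ?_).const_mul two_pos)
  · exact strictMonoOn_powMulProdSqSubSq_div_pow a hc (fun k _ => hpos k) (fun k _ => hle k)
      (by omega) (Or.inl (by omega))
  · exact card_pos.mp (by omega)
  · have hcard' : #((univ.erase i).erase l) = Fintype.card ι - 2 := by
      rw [card_erase_of_mem hl, hcard]; omega
    exact strictMonoOn_powMulProdSqSubSq_div_pow a hc (fun k _ => hpos k) (fun k _ => hle k)
      (by omega) (Or.inl (by omega))

end ProdSqSubSq

/-- Monotonicity of `P/x^j`, `P′/x^j`, `P″/x^j` on `(a_n, ∞)` for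
`P(x) = a₀ ∏ᵢ (x² − aᵢ²)` with `0 < a₁ ≤ ⋯ ≤ a_n`: strictly increasing when `a₀ > 0`,
strictly decreasing when `a₀ < 0`. -/
theorem poly_div_pow_strictMonoOn (n : ℕ) (hn : 1 ≤ n) (a₀ : ℝ)
    (a : Fin n → ℝ) (hapos : ∀ i, 0 < a i) (hamono : Monotone a)
    (P : ℝ → ℝ) (hP : ∀ x, P x = a₀ * ∏ i, (x ^ 2 - a i ^ 2)) :
    (0 < a₀ →
      (∀ j : ℕ, (j : ℤ) ≤ 2 * n →
        StrictMonoOn (fun x => P x / x ^ j) (Ioi (a ⟨n - 1, by omega⟩))) ∧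
      (∀ j : ℕ, (j : ℤ) ≤ 2 * n - 2 →
        StrictMonoOn (fun x => deriv P x / x ^ j) (Ioi (a ⟨n - 1, by omega⟩))) ∧
      (∀ j : ℕ, (j : ℤ) ≤ 2 * n - 4 →
        StrictMonoOn (fun x => deriv (deriv P) x / x ^ j) (Ioi (a ⟨n - 1, by omega⟩)))) ∧
    (a₀ < 0 →
      (∀ j : ℕ, (j : ℤ) ≤ 2 * n →
        StrictAntiOn (fun x => P x / x ^ j) (Ioi (a ⟨n - 1, by omega⟩))) ∧
      (∀ j : ℕ, (j : ℤ) ≤ 2 * n - 2 →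
        StrictAntiOn (fun x => deriv P x / x ^ j) (Ioi (a ⟨n - 1, by omega⟩))) ∧
      (∀ j : ℕ, (j : ℤ) ≤ 2 * n - 4 →
        StrictAntiOn (fun x => deriv (deriv P) x / x ^ j) (Ioi (a ⟨n - 1, by omega⟩)))) := by
  obtain rfl : P = fun x => a₀ * ∏ i, (x ^ 2 - a i ^ 2) := funext hP
  have : Nonempty (Fin n) := ⟨⟨0, hn⟩⟩
  have hle : ∀ i, a i ≤ a ⟨n - 1, by omega⟩ := fun i =>
    hamono (Fin.le_def.2 (Nat.le_sub_one_of_lt i.2))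
  have h₀ := fun (j : ℕ) (hj : (j : ℤ) ≤ 2 * n) =>
    strictMonoOn_prod_sq_sub_sq_div_pow hapos hle (j := j) (by simp; omega)
  have h₁ := fun (j : ℕ) (hj : (j : ℤ) ≤ 2 * n - 2) =>
    strictMonoOn_deriv_prod_sq_sub_sq_div_pow hapos hle (j := j) (by simp; omega)
  have h₂ := fun (j : ℕ) (hj : (j : ℤ) ≤ 2 * n - 4) =>
    strictMonoOn_deriv_deriv_prod_sq_sub_sq_div_pow hapos hle (j := j) (by simp; omega)
  simp only [deriv_const_mul_field', mul_div_assoc]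
  exact ⟨fun ha₀ => ⟨fun j hj => (h₀ j hj).const_mul ha₀,
      fun j hj => (h₁ j hj).const_mul ha₀, fun j hj => (h₂ j hj).const_mul ha₀⟩,
    fun ha₀ => ⟨fun j hj => (h₀ j hj).const_mul_of_neg ha₀,
      fun j hj => (h₁ j hj).const_mul_of_neg ha₀,
      fun j hj => (h₂ j hj).const_mul_of_neg ha₀⟩⟩
end

section
/- Let d ≥ 1 be an integer and q ≥ 2 an even integer. Then the radial moments of the kernel G^B_{d,q} are: B_{d,0}(G^B_{d,q}) = Γ(d/2)/(2π^{d/2}) = 1/b_d; B_{d,i}(G^B_{d,q}) = 0 for every even i with 2 ≤ i ≤ q−2; and B_{d,q}(G^B_{d,q}) = (−1)^{q/2+1} · Γ((d+q)/2) · Γ((d+q+4)/2) / (2π^{d/2} · Γ((d+2q+4)/2)). In particular, G^B_{d,q} satisfies the q-th order radial moment condition. -/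
open MeasureTheory Set Filter Topology

/-! On `[0, 1]` the kernel is an even polynomial, so
`B_{d,2k}(G^B_{d,q}) = ∑ⱼ c_{2j} / (d + 2k + 2j)`. With `a = d/2` and `q = 2(n+1)`, `c_{2j}` is
`(-1)^j (n+2 choose j)` times a constant times the rising factorial `(a+1+j)_n`, so the moment is
an `(n+2)`-nd forward difference of `P(x)/(x+k)` at `x = a`, where `P(x) = (x+1)_n` has degree `n`.
Writing `P(x) = (x+k) Q(x) + P(-k)` with `deg Q < n+2`, the `Q` part is annihilated and what
remains is `P(-k)` times the forward difference of `1/x`, which is `(n+2)! / (a+k)_{n+3}`.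
Finally `P(-k) = (1-k)_n` equals `n!` at `k = 0`, vanishes for `1 ≤ k ≤ n`, and equals
`(-1)^n n!` at `k = n+1`. -/

open Finset Polynomial fwdDiff

-- `Δ_[1]^[N]` does not parse (`]^` is a token of the exterior power notation), hence `(Δ_[1])^[N]`.

theorem sum_range_choose_mul_shift_eq_fwdDiff_iter {R : Type*} [CommRing R] (f : R → R)
    (N : ℕ) (y : R) :
    ∑ j ∈ range (N + 1), (-1 : R) ^ j * N.choose j * f (y + j) = (-1) ^ N * (Δ_[1])^[N] f y := by
  rw [fwdDiff_iter_eq_sum_shift, mul_sum]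
  refine sum_congr rfl fun j hj => ?_
  obtain ⟨i, rfl⟩ : ∃ i, N = j + i := ⟨N - j, by grind⟩
  have hsq : (-1 : R) ^ (i * 2) = 1 := by rw [mul_comm, pow_mul]; simp
  rw [Nat.add_sub_cancel_left, zsmul_eq_mul, nsmul_one]
  push_cast
  linear_combination -(-1 : R) ^ j * ((j + i).choose j) * f (y + j) * hsq

theorem sum_range_choose_mul_eval_eq_zero {R : Type*} [CommRing R] {P : R[X]} {N : ℕ}
    (hP : P.degree < N) (y : R) :
    ∑ j ∈ range (N + 1), (-1 : R) ^ j * N.choose j * P.eval (y + j) = 0 := by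
  rcases eq_or_ne P 0 with rfl | hP0
  · simp
  have h := sum_range_choose_mul_shift_eq_fwdDiff_iter (fun x => P.eval x) N y
  rwa [P.fwdDiff_iter_eq_zero_of_degree_lt ((natDegree_lt_iff_degree_lt hP0).mpr hP),
    Pi.zero_apply, mul_zero] at h

theorem fwdDiff_iter_inv {N : ℕ} {z : ℝ} (hz : 0 < z) :
    (Δ_[1])^[N] (fun x : ℝ => x⁻¹) z
      = (-1) ^ N * N.factorial / (ascPochhammer ℝ (N + 1)).eval z := by
  induction N generalizing z with
  | zero => simp
  | succ N ih =>
    have h1 : 0 < (ascPochhammer ℝ (N + 1)).eval (z + 1) := ascPochhammer_pos _ _ (by linarith)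
    have h2 : 0 < (ascPochhammer ℝ (N + 1)).eval z := ascPochhammer_pos _ _ hz
    have hl : (ascPochhammer ℝ (N + 2)).eval z = z * (ascPochhammer ℝ (N + 1)).eval (z + 1) := by
      simp [ascPochhammer_succ_left ℝ (N + 1)]
    have hr : (ascPochhammer ℝ (N + 2)).eval z
        = (ascPochhammer ℝ (N + 1)).eval z * (z + (N + 1)) := by
      rw [ascPochhammer_succ_eval]; push_cast; ring
    rw [Function.iterate_succ_apply', fwdDiff, ih hz, ih (by linarith), hl, Nat.factorial_succ]
    rw [hl] at hr
    push_cast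
    field_simp
    linear_combination (-(-1 : ℝ) ^ N) * hr

theorem sum_range_choose_mul_inv (N : ℕ) {z : ℝ} (hz : 0 < z) :
    ∑ j ∈ range (N + 1), (-1 : ℝ) ^ j * N.choose j * (z + j)⁻¹
      = N.factorial / (ascPochhammer ℝ (N + 1)).eval z := by
  rw [sum_range_choose_mul_shift_eq_fwdDiff_iter (fun x => x⁻¹), fwdDiff_iter_inv hz,
    ← mul_div_assoc, ← mul_assoc, ← mul_pow]
  norm_num

theorem sum_range_choose_mul_eval_div {P : ℝ[X]} {N : ℕ} (hP : P.natDegree ≤ N) {y r : ℝ}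
    (hry : r < y) :
    ∑ j ∈ range (N + 1), (-1 : ℝ) ^ j * N.choose j * (P.eval (y + j) / (y + j - r))
      = P.eval r * N.factorial / (ascPochhammer ℝ (N + 1)).eval (y - r) := by
  obtain ⟨Q, hQ⟩ : X - C r ∣ P - C (P.eval r) := dvd_iff_isRoot.mpr (by simp)
  have hQdeg : Q.degree < N := by
    rcases eq_or_ne Q 0 with rfl | hQ0
    · simp
    rw [degree_eq_natDegree hQ0, Nat.cast_lt]
    have h := congrArg natDegree hQ
    rw [natDegree_sub_C, natDegree_mul (X_sub_C_ne_zero r) hQ0, natDegree_X_sub_C] at h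
    omega
  have hsplit : ∀ j : ℕ,
      P.eval (y + j) / (y + j - r) = Q.eval (y + j) + P.eval r * (y - r + j)⁻¹ := by
    intro j
    have h := congrArg (eval (y + j)) hQ
    simp only [eval_sub, eval_C, eval_mul, eval_X] at h
    have hne : y + j - r ≠ 0 := by have := j.cast_nonneg (α := ℝ); linarith
    rw [show y - r + j = y + j - r by ring]
    field_simp
    linear_combination h
  simp only [hsplit, mul_add, sum_add_distrib, sum_range_choose_mul_eval_eq_zero hQdeg, zero_add]
  rw [mul_div_assoc, ← sum_range_choose_mul_inv N (sub_pos.mpr hry), mul_sum]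
  exact sum_congr rfl fun j _ => by ring

theorem Real.Gamma_add_nat_eq_ascPochhammer_mul {x : ℝ} (hx : 0 < x) (n : ℕ) :
    Real.Gamma (x + n) = (ascPochhammer ℝ n).eval x * Real.Gamma x := by
  induction n with
  | zero => simp
  | succ n ih =>
    rw [Nat.cast_succ, ← add_assoc, Real.Gamma_add_one (by positivity), ih,
      ascPochhammer_succ_eval]
    ring

theorem pow_mul_GB_eq_indicator (d q p : ℕ) :
    (fun x => x ^ p * GB d q x)
      = (Set.Iic 1).indicator
          fun x => ∑ j ∈ range (q / 2 + 2), cB d q (2 * j) * x ^ (p + 2 * j) := by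
  ext x
  by_cases hx : x ≤ 1
  · simp [GB, hx, mul_sum, pow_add, mul_left_comm]
  · simp [GB, hx]

theorem integrableOn_Ioi_indicator_Iic_one {g : ℝ → ℝ} (hg : Continuous g) :
    IntegrableOn ((Set.Iic 1).indicator g) (Ioi 0) := by
  rw [integrableOn_indicator_iff measurableSet_Iic, Iic_inter_Ioi]
  exact hg.integrableOn_Ioc

theorem setIntegral_Ioi_indicator_Iic_one (g : ℝ → ℝ) :
    ∫ x in Ioi 0, (Set.Iic 1).indicator g x = ∫ x in (0 : ℝ)..1, g x := by
  rw [setIntegral_indicator measurableSet_Iic, Ioi_inter_Iic,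
    intervalIntegral.integral_of_le zero_le_one]

theorem integrableOn_pow_mul_GB (d q p : ℕ) :
    IntegrableOn (fun x => x ^ p * GB d q x) (Ioi 0) := by
  rw [pow_mul_GB_eq_indicator]
  exact integrableOn_Ioi_indicator_Iic_one (by fun_prop)

theorem Bmom_GB {d : ℕ} (hd : 1 ≤ d) (q i : ℕ) :
    Bmom d i (GB d q) = ∑ j ∈ range (q / 2 + 2), cB d q (2 * j) / (d + i + 2 * j) := by
  rw [Bmom, pow_mul_GB_eq_indicator, setIntegral_Ioi_indicator_Iic_one,
    intervalIntegral.integral_finsetSum fun j _ => by apply Continuous.intervalIntegrable; fun_prop]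
  refine sum_congr rfl fun j _ => ?_
  have hexp : ((d - 1 + i + 2 * j : ℕ) : ℝ) + 1 = d + i + 2 * j := by
    rw [Nat.cast_add, Nat.cast_add, Nat.cast_sub hd]
    push_cast
    ring
  rw [intervalIntegral.integral_const_mul, integral_pow, hexp]
  simp [div_eq_mul_inv]

theorem cB_two_mul (d n : ℕ) {j : ℕ} (hj : j ≤ n + 2) :
    cB d (2 * (n + 1)) (2 * j) = (-1) ^ j * (n + 2).choose j *
      (Real.Gamma ((d : ℝ) / 2 + n + 3) * (ascPochhammer ℝ n).eval ((d : ℝ) / 2 + 1 + j) /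
        (Real.pi ^ ((d : ℝ) / 2) * n.factorial * (n + 2).factorial)) := by
  have hb : (0 : ℝ) < (d : ℝ) / 2 + 1 + j := by positivity
  have hΓ₁ : Real.Gamma (((d : ℝ) + (2 * (n + 1) : ℕ) + 4) / 2)
      = Real.Gamma ((d : ℝ) / 2 + n + 3) := by
    congr 1; push_cast; ring
  have hΓ₂ : Real.Gamma (((d : ℝ) + (2 * (n + 1) : ℕ) + (2 * j : ℕ)) / 2)
      = (ascPochhammer ℝ n).eval ((d : ℝ) / 2 + 1 + j) * Real.Gamma ((d : ℝ) / 2 + 1 + j) := by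
    rw [← Real.Gamma_add_nat_eq_ascPochhammer_mul hb]; congr 1; push_cast; ring
  have hΓ₃ : Real.Gamma (((2 * (n + 1) : ℕ) : ℝ) / 2) = n.factorial := by
    rw [← Real.Gamma_nat_eq_factorial]; congr 1; push_cast; ring
  have hΓ₄ : Real.Gamma ((2 + ((2 * j : ℕ) : ℝ)) / 2) = j.factorial := by
    rw [← Real.Gamma_nat_eq_factorial]; congr 1; push_cast; ring
  have hΓ₅ : Real.Gamma (((d : ℝ) + 2 + ((2 * j : ℕ) : ℝ)) / 2)
      = Real.Gamma ((d : ℝ) / 2 + 1 + j) := by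
    congr 1; push_cast; ring
  have hΓ₆ : Real.Gamma ((((2 * (n + 1) : ℕ) : ℝ) + 4 - ((2 * j : ℕ) : ℝ)) / 2)
      = (n + 2 - j).factorial := by
    rw [← Real.Gamma_nat_eq_factorial]; congr 1; rw [Nat.cast_sub hj]; push_cast; ring
  have hΓpos := Real.Gamma_pos_of_pos hb
  rw [cB, hΓ₁, hΓ₂, hΓ₃, hΓ₄, hΓ₅, hΓ₆, Nat.cast_choose ℝ hj, Nat.mul_div_cancel_left j two_pos]
  field_simp

theorem Bmom_two_mul_GB {d : ℕ} (hd : 1 ≤ d) (n k : ℕ) :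
    Bmom d (2 * k) (GB d (2 * (n + 1))) =
      Real.Gamma ((d : ℝ) / 2 + n + 3) * Real.Gamma ((d : ℝ) / 2 + k) *
          (ascPochhammer ℝ n).eval (1 - k : ℝ) /
        (2 * Real.pi ^ ((d : ℝ) / 2) * n.factorial * Real.Gamma ((d : ℝ) / 2 + k + n + 3)) := by
  have ha : (0 : ℝ) < (d : ℝ) / 2 := by positivity
  have hk : (0 : ℝ) ≤ k := k.cast_nonneg
  set P : ℝ[X] := (ascPochhammer ℝ n).comp (X + C 1)
  have hPdeg : P.natDegree ≤ n + 2 := by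
    rw [natDegree_comp, ascPochhammer_natDegree, natDegree_X_add_C]
    omega
  have hterm : ∀ j ∈ range (n + 3), cB d (2 * (n + 1)) (2 * j) / (d + (2 * k : ℕ) + 2 * j)
      = Real.Gamma ((d : ℝ) / 2 + n + 3) /
          (2 * Real.pi ^ ((d : ℝ) / 2) * n.factorial * (n + 2).factorial) *
        ((-1) ^ j * (n + 2).choose j * (P.eval ((d : ℝ) / 2 + j) / ((d : ℝ) / 2 + j - -k))) := by
    intro j hj
    have hden : (d : ℝ) + (2 * k : ℕ) + 2 * j = 2 * ((d : ℝ) / 2 + j - -k) := by push_cast; ring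
    rw [cB_two_mul d n (by simpa [Nat.lt_succ_iff] using hj), hden]
    simp only [P, eval_comp, eval_add, eval_X, eval_C, add_right_comm _ (j : ℝ)]
    field_simp
  have hA : (ascPochhammer ℝ (n + 3)).eval ((d : ℝ) / 2 - -k) * Real.Gamma ((d : ℝ) / 2 + k)
      = Real.Gamma ((d : ℝ) / 2 + k + n + 3) := by
    rw [sub_neg_eq_add, ← Real.Gamma_add_nat_eq_ascPochhammer_mul (by positivity)]
    push_cast
    ring_nf
  rw [Bmom_GB hd, show 2 * (n + 1) / 2 + 2 = n + 3 by omega, sum_congr rfl hterm, ← mul_sum,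
    sum_range_choose_mul_eval_div hPdeg (by linarith), ← hA]
  simp only [P, eval_comp, eval_add, eval_X, eval_C, neg_add_eq_sub]
  have hΓ := Real.Gamma_pos_of_pos (by positivity : (0 : ℝ) < (d : ℝ) / 2 + k)
  field_simp

theorem Bmom_zero_GB {d : ℕ} (hd : 1 ≤ d) (n : ℕ) :
    Bmom d 0 (GB d (2 * (n + 1))) = Real.Gamma ((d : ℝ) / 2) / (2 * Real.pi ^ ((d : ℝ) / 2)) := by
  have h := Bmom_two_mul_GB hd n 0
  have hΓ := Real.Gamma_pos_of_pos (by positivity : (0 : ℝ) < (d : ℝ) / 2 + n + 3)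
  rw [mul_zero, Nat.cast_zero, sub_zero, ascPochhammer_eval_one, add_zero] at h
  rw [h]
  field_simp

theorem Bmom_two_mul_GB_eq_zero {d : ℕ} (hd : 1 ≤ d) {n k : ℕ} (hk₁ : 1 ≤ k) (hk₂ : k ≤ n) :
    Bmom d (2 * k) (GB d (2 * (n + 1))) = 0 := by
  have hroot : (1 - k : ℝ) = -((k - 1 : ℕ) : ℝ) := by rw [Nat.cast_sub hk₁]; push_cast; ring
  rw [Bmom_two_mul_GB hd, hroot, ascPochhammer_eval_neg_coe_nat_of_lt (by omega), mul_zero,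
    zero_div]

theorem Bmom_order_GB {d : ℕ} (hd : 1 ≤ d) (n : ℕ) :
    Bmom d (2 * (n + 1)) (GB d (2 * (n + 1))) =
      (-1) ^ n * Real.Gamma ((d : ℝ) / 2 + n + 1) * Real.Gamma ((d : ℝ) / 2 + n + 3) /
        (2 * Real.pi ^ ((d : ℝ) / 2) * Real.Gamma ((d : ℝ) / 2 + 2 * n + 4)) := by
  have hroot : (1 - (n + 1 : ℕ) : ℝ) = -(n : ℝ) := by push_cast; ring
  rw [Bmom_two_mul_GB hd, hroot, ascPochhammer_eval_neg_eq_descPochhammer,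
    descPochhammer_eval_eq_descFactorial, Nat.descFactorial_self]
  have hΓ := Real.Gamma_pos_of_pos (by positivity : (0 : ℝ) < (d : ℝ) / 2 + 2 * n + 4)
  push_cast
  field_simp
  ring_nf

/-- Radial moments of the optimal kernel `G^B_{d,q}`:
`B_{d,0} = Γ(d/2)/(2π^{d/2}) = 1/b_d`, the intermediate even moments vanish, and
`B_{d,q} = (−1)^{q/2+1} Γ((d+q)/2) Γ((d+q+4)/2) / (2π^{d/2} Γ((d+2q+4)/2))`; in particular
`G^B_{d,q}` satisfies the `q`-th order radial moment condition. -/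
theorem GB_moments (d q : ℕ) (hd : 1 ≤ d) (hq : 2 ≤ q) (hqe : Even q) :
    Bmom d 0 (GB d q) = Real.Gamma ((d : ℝ) / 2) / (2 * Real.pi ^ ((d : ℝ) / 2)) ∧
    Bmom d 0 (GB d q) = (bconst d)⁻¹ ∧
    (∀ i, Even i → 2 ≤ i → i ≤ q - 2 → Bmom d i (GB d q) = 0) ∧
    Bmom d q (GB d q) =
      (-1 : ℝ) ^ (q / 2 + 1) * Real.Gamma (((d : ℝ) + q) / 2) *
        Real.Gamma (((d : ℝ) + q + 4) / 2) /
        (2 * Real.pi ^ ((d : ℝ) / 2) * Real.Gamma (((d : ℝ) + 2 * q + 4) / 2)) ∧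
    MomentCond d q (GB d q) := by
  obtain ⟨n, rfl⟩ : ∃ n, q = 2 * (n + 1) := ⟨q / 2 - 1, by grind⟩
  have h0 := Bmom_zero_GB hd n
  have hb : Bmom d 0 (GB d (2 * (n + 1))) = (bconst d)⁻¹ := by rw [h0, bconst, inv_div]
  have hmid : ∀ i, Even i → 2 ≤ i → i ≤ 2 * (n + 1) - 2 → Bmom d i (GB d (2 * (n + 1))) = 0 := by
    rintro _ ⟨k, rfl⟩ h₁ h₂
    rw [← two_mul]
    exact Bmom_two_mul_GB_eq_zero hd (by omega) (by omega)
  have htop := Bmom_order_GB hd n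
  refine ⟨h0, hb, hmid, ?_, fun i _ _ => integrableOn_pow_mul_GB d _ _, hb, hmid, ?_⟩
  · rw [htop, show 2 * (n + 1) / 2 + 1 = n + 2 by omega]
    push_cast
    ring_nf
  · rw [htop, mul_assoc, mul_div_assoc]
    exact mul_ne_zero (pow_ne_zero _ (by norm_num)) (by positivity)
end

section
/- Let d ≥ 1 be an integer and q ≥ 2 an even integer, and let G : [0,∞) → ℝ be differentiable with G′ continuous almost everywhere, such that ∫₀^∞ x^{d−1+i}|G(x)| dx < ∞ and ∫₀^∞ x^{d+i}|G′(x)| dx < ∞ for all 0 ≤ i ≤ q+1, and x^{d+q}·G(x) → 0 as x → ∞. Then the integration-by-parts identity B_{d,i}(G) = −(d+i)^{−1}·B_{d,i+1}(G′) holds for every i ∈ {0, 1, …, q}, and consequently the following are equivalent: (i) G satisfies the q-th order radial moment condition; (ii) G′ satisfies B_{d,1}(G′) = −d/b_d, B_{d,i}(G′) = 0 for every odd i with 3 ≤ i ≤ q−1, and B_{d,q+1}(G′) ≠ 0. -/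
open MeasureTheory Set Filter Topology

/-!
Integrating `(x ^ n * G x)' = n x ^ (n - 1) G x + x ^ n G' x` over `(0, ∞)`, the boundary terms
vanish (at `0` because `n ≥ 1`, at `∞` by the tail condition), which gives
`B_{d,i+1}(G') = -(d + i) B_{d,i}(G)`. Since `d + i ≠ 0`, the moment conditions on `G` and on `G'`
then translate into each other index by index.
-/

theorem integrableOn_Ioi_pow_mul_of_abs_s16 {f : ℝ → ℝ} {k : ℕ}
    (hf : AEStronglyMeasurable f (volume.restrict (Ioi 0)))
    (h : IntegrableOn (fun x => x ^ k * |f x|) (Ioi 0)) :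
    IntegrableOn (fun x => x ^ k * f x) (Ioi 0) := by
  refine h.mono' ((continuous_pow k).aestronglyMeasurable.restrict.mul hf) ?_
  filter_upwards [ae_restrict_mem measurableSet_Ioi] with x hx
  rw [norm_mul, norm_pow, Real.norm_eq_abs, Real.norm_eq_abs, abs_of_pos hx]

theorem tendsto_pow_mul_atTop_zero_of_le {g : ℝ → ℝ} {m n : ℕ} (hnm : n ≤ m)
    (h : Tendsto (fun x => x ^ m * g x) atTop (𝓝 0)) :
    Tendsto (fun x => x ^ n * g x) atTop (𝓝 0) := by
  refine squeeze_zero_norm' ?_ (by simpa using h.norm)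
  filter_upwards [eventually_ge_atTop (1 : ℝ)] with x hx
  simp only [norm_mul, norm_pow, Real.norm_eq_abs]
  gcongr
  exact hx.trans (le_abs_self x)

theorem integral_Ioi_pow_mul_deriv {G : ℝ → ℝ} {n : ℕ} (hn : n ≠ 0)
    (hdiff : ∀ x ∈ Ici (0 : ℝ), DifferentiableAt ℝ G x)
    (hG : IntegrableOn (fun x => x ^ (n - 1) * G x) (Ioi 0))
    (hG' : IntegrableOn (fun x => x ^ n * deriv G x) (Ioi 0))
    (htail : Tendsto (fun x => x ^ n * G x) atTop (𝓝 0)) :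
    ∫ x in Ioi (0 : ℝ), x ^ n * deriv G x = -n * ∫ x in Ioi (0 : ℝ), x ^ (n - 1) * G x := by
  have hderiv : ∀ x ∈ Ici (0 : ℝ), HasDerivAt (fun x => x ^ n * G x)
      (n * (x ^ (n - 1) * G x) + x ^ n * deriv G x) x := fun x hx => by
    simpa only [mul_assoc] using (hasDerivAt_pow n x).fun_mul (hdiff x hx).hasDerivAt
  have hFTC := integral_Ioi_of_hasDerivAt_of_tendsto' hderiv ((hG.const_mul n).add hG') htail
  rw [integral_add (hG.const_mul _) hG', integral_const_mul, zero_pow hn, zero_mul,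
    sub_zero] at hFTC
  linarith

theorem Bmom_succ_deriv {d i : ℕ} {G : ℝ → ℝ} (hd : 1 ≤ d)
    (hdiff : ∀ x ∈ Ici (0 : ℝ), DifferentiableAt ℝ G x)
    (hG : IntegrableOn (fun x => x ^ (d - 1 + i) * G x) (Ioi 0))
    (hG' : IntegrableOn (fun x => x ^ (d + i) * deriv G x) (Ioi 0))
    (htail : Tendsto (fun x => x ^ (d + i) * G x) atTop (𝓝 0)) :
    Bmom d (i + 1) (deriv G) = -((d : ℝ) + i) * Bmom d i G := by
  have hexp : d + i - 1 = d - 1 + i := by omega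
  rw [Bmom, Bmom, show d - 1 + (i + 1) = d + i by omega,
    integral_Ioi_pow_mul_deriv (by omega) hdiff (by rwa [hexp]) hG' htail, hexp]
  push_cast
  ring

theorem moment_conditions_iff_of_shift {a b : ℕ → ℝ} {d q : ℕ} (β : ℝ) (hd : d ≠ 0)
    (hshift : ∀ i ≤ q, b (i + 1) = -((d : ℝ) + i) * a i) :
    (a 0 = β⁻¹ ∧ (∀ i, Even i → 2 ≤ i → i ≤ q - 2 → a i = 0) ∧ a q ≠ 0) ↔
      (b 1 = -(d : ℝ) / β ∧ (∀ i, Odd i → 3 ≤ i → i ≤ q - 1 → b i = 0) ∧ b (q + 1) ≠ 0) := by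
  have hd' : (d : ℝ) ≠ 0 := Nat.cast_ne_zero.mpr hd
  have hdi : ∀ i : ℕ, (d : ℝ) + i ≠ 0 := fun i => by norm_cast; omega
  have hb1 : b 1 = -(d : ℝ) * a 0 := by simpa using hshift 0 (Nat.zero_le q)
  have hbq : b (q + 1) ≠ 0 ↔ a q ≠ 0 := by
    rw [hshift q le_rfl, mul_ne_zero_iff, and_iff_right (neg_ne_zero.mpr (hdi q))]
  have hodd : (∀ i, Odd i → 3 ≤ i → i ≤ q - 1 → b i = 0) ↔
      (∀ i, Even i → 2 ≤ i → i ≤ q - 2 → a i = 0) := by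
    constructor
    · intro h i hi hi2 hiq
      have := h (i + 1) hi.add_one (by omega) (by omega)
      rw [hshift i (by omega)] at this
      exact (mul_eq_zero.mp this).resolve_left (neg_ne_zero.mpr (hdi i))
    · rintro h (_ | i) hi hi3 hiq
      · omega
      · rw [hshift i (by omega), h i (by simpa [Nat.odd_add_one] using hi) (by omega) (by omega),
          mul_zero]
  rw [hb1, hbq, hodd, neg_mul, neg_div, neg_inj, div_eq_mul_inv, mul_right_inj' hd']

theorem radial_moment_integration_by_parts_general (d q : ℕ) (hd : 1 ≤ d) (G : ℝ → ℝ)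
    (hdiff : ∀ x ∈ Ici (0 : ℝ), DifferentiableAt ℝ G x)
    (hintG : ∀ i ≤ q + 1, IntegrableOn (fun x => x ^ (d - 1 + i) * |G x|) (Ioi 0))
    (hintG' : ∀ i ≤ q + 1, IntegrableOn (fun x => x ^ (d + i) * |deriv G x|) (Ioi 0))
    (htail : Filter.Tendsto (fun x => x ^ (d + q) * G x) Filter.atTop (nhds 0)) :
    (∀ i ≤ q, Bmom d i G = -(((d : ℝ) + i)⁻¹) * Bmom d (i + 1) (deriv G)) ∧
    ((Bmom d 0 G = (bconst d)⁻¹ ∧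
        (∀ i, Even i → 2 ≤ i → i ≤ q - 2 → Bmom d i G = 0) ∧ Bmom d q G ≠ 0) ↔
      (Bmom d 1 (deriv G) = -(d : ℝ) / bconst d ∧
        (∀ i, Odd i → 3 ≤ i → i ≤ q - 1 → Bmom d i (deriv G) = 0) ∧
        Bmom d (q + 1) (deriv G) ≠ 0)) := by
  have hGm : AEStronglyMeasurable G (volume.restrict (Ioi 0)) :=
    ContinuousOn.aestronglyMeasurable
      (fun x hx => (hdiff x (mem_Ici.mpr hx.le)).continuousAt.continuousWithinAt)
      measurableSet_Ioi
  have hshift : ∀ i ≤ q, Bmom d (i + 1) (deriv G) = -((d : ℝ) + i) * Bmom d i G :=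
    fun i hi => Bmom_succ_deriv hd hdiff
      (integrableOn_Ioi_pow_mul_of_abs_s16 hGm (hintG i (by omega)))
      (integrableOn_Ioi_pow_mul_of_abs_s16 (measurable_deriv G).aestronglyMeasurable.restrict
        (hintG' i (by omega)))
      (tendsto_pow_mul_atTop_zero_of_le (n := d + i) (by omega) htail)
  refine ⟨fun i hi => ?_, moment_conditions_iff_of_shift (a := (Bmom d · G))
    (b := (Bmom d · (deriv G))) _ (by omega) hshift⟩
  rw [hshift i hi, ← mul_assoc, neg_mul_neg, inv_mul_cancel₀ (by positivity), one_mul]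

/-- Integration by parts for radial moments: under integrability and tail conditions,
`B_{d,i}(G) = −(d+i)⁻¹ B_{d,i+1}(G′)` for `0 ≤ i ≤ q`, and consequently `G` satisfies the
`q`-th order radial moment condition iff `G′` satisfies the corresponding odd-moment
conditions. -/
theorem radial_moment_integration_by_parts (d q : ℕ) (hd : 1 ≤ d) (hq : 2 ≤ q)
    (hqe : Even q) (G : ℝ → ℝ)
    (hdiff : ∀ x ∈ Ici (0 : ℝ), DifferentiableAt ℝ G x)
    (hcont : ∀ᵐ x ∂(volume.restrict (Ioi (0 : ℝ))), ContinuousAt (deriv G) x)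
    (hintG : ∀ i ≤ q + 1, IntegrableOn (fun x => x ^ (d - 1 + i) * |G x|) (Ioi 0))
    (hintG' : ∀ i ≤ q + 1, IntegrableOn (fun x => x ^ (d + i) * |deriv G x|) (Ioi 0))
    (htail : Filter.Tendsto (fun x => x ^ (d + q) * G x) Filter.atTop (nhds 0)) :
    (∀ i ≤ q, Bmom d i G = -(((d : ℝ) + i)⁻¹) * Bmom d (i + 1) (deriv G)) ∧
    ((Bmom d 0 G = (bconst d)⁻¹ ∧
        (∀ i, Even i → 2 ≤ i → i ≤ q - 2 → Bmom d i G = 0) ∧ Bmom d q G ≠ 0) ↔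
      (Bmom d 1 (deriv G) = -(d : ℝ) / bconst d ∧
        (∀ i, Odd i → 3 ≤ i → i ≤ q - 1 → Bmom d i (deriv G) = 0) ∧
        Bmom d (q + 1) (deriv G) ≠ 0)) :=
  radial_moment_integration_by_parts_general d q hd G hdiff hintG hintG' htail
end
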